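/- arXiv:1608.00264 — 10 statements merged into one kernel-verified Lean document; each statement's English description precedes it below -/
import Mathlib

section
/- Let ρ be a measure on (0,∞) satisfying ∫_0^∞ min(1, r) dρ(r) < ∞. Then for every real φ ≥ 0, the quantity ∫_0^∞ (1 − e^{−(1 − e^{−φ})r}) dρ(r) is finite and equals ∑_{j=1}^∞ (1 − e^{−φ·j}) · ∫_0^∞ (r^j e^{−r}/j!) dρ(r), where every integral on the right is finite and the series converges. -/
/-!
With the Poisson weights `p_j(r) = r^j e^{-r} / j!`, the exponential series gives
`∑_j e^{-φj} p_j(r) = e^{-r} e^{r e^{-φ}}` and `∑_j p_j(r) = 1`, hence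
`∑_{j≥1} (1 - e^{-φj}) p_j(r) = 1 - e^{-(1 - e^{-φ}) r}` (the `j = 0` term vanishes).
All functions of `r` involved are nonnegative and bounded by `min 1 r`, so the hypothesis on `ρ`
makes every integral finite, and monotone convergence integrates the identity term by term.
-/

open MeasureTheory Real

lemma hasSum_pow_mul_exp_neg_div_factorial (x r : ℝ) :
    HasSum (fun j : ℕ => x ^ j * exp (-r) / j.factorial) (exp (x - r)) := by
  have h := (NormedSpace.expSeries_div_hasSum_exp x).mul_right (exp (-r))
  rw [← exp_eq_exp_ℝ, ← exp_add, ← sub_eq_add_neg] at h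
  simpa only [div_mul_eq_mul_div] using h

lemma pow_mul_exp_neg_div_factorial_le_one {r : ℝ} (hr : 0 ≤ r) (j : ℕ) :
    r ^ j * exp (-r) / j.factorial ≤ 1 := by
  simpa only [sub_self, exp_zero] using
    le_hasSum (hasSum_pow_mul_exp_neg_div_factorial r r) j fun i _ => by positivity

lemma pow_succ_mul_exp_neg_div_factorial_le_min {r : ℝ} (hr : 0 ≤ r) (j : ℕ) :
    r ^ (j + 1) * exp (-r) / (j + 1).factorial ≤ min 1 r := by
  refine le_min (pow_mul_exp_neg_div_factorial_le_one hr _) ?_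
  calc r ^ (j + 1) * exp (-r) / (j + 1).factorial ≤ r ^ (j + 1) * exp (-r) / j.factorial := by
        gcongr
        exact j.le_succ
    _ = r * (r ^ j * exp (-r) / j.factorial) := by ring
    _ ≤ r * 1 := by gcongr; exact pow_mul_exp_neg_div_factorial_le_one hr j
    _ = r := mul_one r

lemma one_sub_exp_neg_mul_le_min {c r : ℝ} (hc : c ≤ 1) (hr : 0 ≤ r) :
    1 - exp (-(c * r)) ≤ min 1 r := by
  refine le_min (sub_le_self _ (exp_pos _).le) ?_
  calc 1 - exp (-(c * r)) ≤ c * r := by linarith [one_sub_le_exp_neg (c * r)]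
    _ ≤ 1 * r := by gcongr
    _ = r := one_mul r

lemma hasSum_one_sub_exp_neg_mul_pow_succ (φ r : ℝ) :
    HasSum (fun j : ℕ => (1 - exp (-(φ * (j + 1)))) * (r ^ (j + 1) * exp (-r) / (j + 1).factorial))
      (1 - exp (-((1 - exp (-φ)) * r))) := by
  have h := (hasSum_pow_mul_exp_neg_div_factorial r r).sub
    (hasSum_pow_mul_exp_neg_div_factorial (r * exp (-φ)) r)
  rw [← hasSum_nat_add_iff' 1] at h
  rw [Finset.sum_range_one, pow_zero, pow_zero, sub_self, sub_self, sub_zero, exp_zero,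
    show r * exp (-φ) - r = -((1 - exp (-φ)) * r) by ring] at h
  refine h.congr_fun fun j => ?_
  rw [mul_pow, ← exp_nat_mul]
  push_cast
  ring_nf

section SetLIntegral

variable {α : Type*} [MeasurableSpace α] {μ : Measure α} {s : Set α}

lemma setLIntegral_ofReal_ne_top_of_le (hs : MeasurableSet s) {f g : α → ℝ}
    (hg : ∫⁻ x in s, ENNReal.ofReal (g x) ∂μ ≠ ⊤) (hfg : ∀ x ∈ s, f x ≤ g x) :
    ∫⁻ x in s, ENNReal.ofReal (f x) ∂μ ≠ ⊤ :=
  ne_top_of_le_ne_top hg <|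
    setLIntegral_mono' hs fun x hx => ENNReal.ofReal_le_ofReal (hfg x hx)

lemma setLIntegral_ofReal_eq_tsum_of_hasSum (hs : MeasurableSet s) {c : ℕ → ℝ}
    {f : ℕ → α → ℝ} {g : α → ℝ} (hc : ∀ j, 0 ≤ c j) (hf : ∀ j, Measurable (f j))
    (hf_nonneg : ∀ j, ∀ x ∈ s, 0 ≤ f j x) (hg : ∀ x ∈ s, HasSum (fun j => c j * f j x) (g x)) :
    ∫⁻ x in s, ENNReal.ofReal (g x) ∂μ =
      ∑' j, ENNReal.ofReal (c j) * ∫⁻ x in s, ENNReal.ofReal (f j x) ∂μ := by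
  have pointwise : ∀ x ∈ s,
      ENNReal.ofReal (g x) = ∑' j, ENNReal.ofReal (c j) * ENNReal.ofReal (f j x) := by
    intro x hx
    rw [← (hg x hx).tsum_eq, ENNReal.ofReal_tsum_of_nonneg
      (fun j => mul_nonneg (hc j) (hf_nonneg j x hx)) (hg x hx).summable]
    exact tsum_congr fun j => ENNReal.ofReal_mul (hc j)
  rw [setLIntegral_congr_fun hs pointwise,
    lintegral_tsum fun j => ((hf j).ennreal_ofReal.const_mul _).aemeasurable]
  exact tsum_congr fun j => lintegral_const_mul _ (hf j).ennreal_ofReal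

end SetLIntegral

/-- **Corollary 1** (Lévy measure of the `G` mixed Poisson process): if `ρ` is a measure on
`(0,∞)` with `∫ min(1,r) dρ(r) < ∞`, then for every `φ ≥ 0` the quantity
`∫ (1 − e^{−(1−e^{−φ})r}) dρ(r)` is finite and equals
`∑_{j≥1} (1 − e^{−φ j}) ∫ (r^j e^{−r}/j!) dρ(r)`, where each integral on the right is
finite (and the `ℝ≥0∞`-valued series automatically converges). -/
theorem mixedPoisson_levy_measure (ρ : Measure ℝ)
    (hρ : ∫⁻ r in Set.Ioi (0 : ℝ), ENNReal.ofReal (min 1 r) ∂ρ ≠ ⊤)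
    (φ : ℝ) (hφ : 0 ≤ φ) :
    (∫⁻ r in Set.Ioi (0 : ℝ),
        ENNReal.ofReal (1 - Real.exp (-((1 - Real.exp (-φ)) * r))) ∂ρ ≠ ⊤) ∧
    (∀ j : ℕ,
      ∫⁻ r in Set.Ioi (0 : ℝ),
        ENNReal.ofReal (r ^ (j + 1) * Real.exp (-r) / (Nat.factorial (j + 1))) ∂ρ ≠ ⊤) ∧
    (∫⁻ r in Set.Ioi (0 : ℝ),
        ENNReal.ofReal (1 - Real.exp (-((1 - Real.exp (-φ)) * r))) ∂ρ =
      ∑' j : ℕ, ENNReal.ofReal (1 - Real.exp (-(φ * (j + 1)))) *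
        ∫⁻ r in Set.Ioi (0 : ℝ),
          ENNReal.ofReal (r ^ (j + 1) * Real.exp (-r) / (Nat.factorial (j + 1))) ∂ρ) := by
  refine ⟨setLIntegral_ofReal_ne_top_of_le measurableSet_Ioi hρ fun r hr =>
      one_sub_exp_neg_mul_le_min (sub_le_self _ (exp_pos _).le) (le_of_lt hr),
    fun j => setLIntegral_ofReal_ne_top_of_le measurableSet_Ioi hρ fun r hr =>
      pow_succ_mul_exp_neg_div_factorial_le_min (le_of_lt hr) j,
    setLIntegral_ofReal_eq_tsum_of_hasSum measurableSet_Ioi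
      (fun j => sub_nonneg.mpr (exp_le_one_iff.mpr (neg_nonpos.mpr (by positivity))))
      (fun j => by fun_prop) (fun j r hr => by have := Set.mem_Ioi.mp hr; positivity)
      fun r _ => hasSum_one_sub_exp_neg_mul_pow_succ φ r⟩
end

section
/- Let ρ be a measure on (0,∞) with ∫_0^∞ min(1, r) dρ(r) < ∞ and set γ = ∫_0^∞ (1 − e^{−r}) dρ(r); assume 0 < γ < ∞. Define π_j = (1/γ) ∫_0^∞ (r^j e^{−r}/j!) dρ(r) for j = 1, 2, …. Then (π_j)_{j≥1} is a probability mass function on the positive integers (each π_j ∈ [0,1] and ∑_{j≥1} π_j = 1), and for every t ∈ [0,1] one has exp{ γ·( ∑_{j≥1} π_j t^j − 1 ) } = exp{ −∫_0^∞ (1 − e^{−(1−t)r}) dρ(r) }. -/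
/-!
Expanding `e^{tr} - 1 = ∑_{j ≥ 1} (tr)^j / j!` and multiplying by `e^{-r}` gives, for `r ≥ 0`,
`∑_{j ≥ 1} t^j r^j e^{-r} / j! = e^{-(1-t)r} - e^{-r}`, a series of nonnegative terms, so it may be
integrated termwise against `ρ`. At `t = 1` this says `∑_j γ π_j = γ`. For general `t`, splitting
`1 - e^{-r} = (1 - e^{-(1-t)r}) + (e^{-(1-t)r} - e^{-r})` inside the integral defining `γ` gives
`γ ∑_j π_j t^j = γ - ∫ (1 - e^{-(1-t)r}) dρ`, which is the exponent identity.
-/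

open MeasureTheory Real
open scoped Nat ENNReal

lemma Real.hasSum_pow_succ_div_factorial (x : ℝ) :
    HasSum (fun j : ℕ => x ^ (j + 1) / (j + 1)!) (exp x - 1) := by
  have h := NormedSpace.expSeries_div_hasSum_exp (𝔸 := ℝ) x
  rw [← Real.exp_eq_exp_ℝ] at h
  simpa using (hasSum_nat_add_iff' 1).mpr h

/-- `ProbabilityTheory.poissonPMFReal` with a real rate. -/
noncomputable def poissonWeight (j : ℕ) (r : ℝ) : ℝ := r ^ j * exp (-r) / j !

lemma poissonWeight_nonneg {r : ℝ} (hr : 0 ≤ r) (j : ℕ) : 0 ≤ poissonWeight j r := by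
  unfold poissonWeight; positivity

@[fun_prop]
lemma measurable_poissonWeight (j : ℕ) : Measurable (poissonWeight j) := by
  unfold poissonWeight; fun_prop

lemma hasSum_pow_mul_poissonWeight (t r : ℝ) :
    HasSum (fun j : ℕ => t ^ (j + 1) * poissonWeight (j + 1) r)
      (exp (-((1 - t) * r)) - exp (-r)) := by
  have hexp : exp (-((1 - t) * r)) - exp (-r) = (exp (t * r) - 1) * exp (-r) := by
    rw [sub_one_mul, ← exp_add]; ring_nf
  rw [hexp]
  exact ((hasSum_pow_succ_div_factorial (t * r)).mul_right (exp (-r))).congr_fun fun j => by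
    simp only [poissonWeight, mul_pow]; ring

lemma tsum_ofReal_pow_mul_lintegral_poissonWeight {μ : Measure ℝ} (hμ : ∀ᵐ r ∂μ, 0 ≤ r)
    {t : ℝ} (ht : 0 ≤ t) :
    ∑' j : ℕ, ENNReal.ofReal (t ^ (j + 1)) * ∫⁻ r, ENNReal.ofReal (poissonWeight (j + 1) r) ∂μ =
      ∫⁻ r, ENNReal.ofReal (exp (-((1 - t) * r)) - exp (-r)) ∂μ := by
  simp_rw [← lintegral_const_mul' _ _ ENNReal.ofReal_ne_top]
  rw [← lintegral_tsum fun j => by fun_prop]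
  refine lintegral_congr_ae (hμ.mono fun r hr => ?_)
  have h := hasSum_pow_mul_poissonWeight t r
  simp_rw [← ENNReal.ofReal_mul (pow_nonneg ht _)]
  rw [← ENNReal.ofReal_tsum_of_nonneg
    (fun j => mul_nonneg (pow_nonneg ht _) (poissonWeight_nonneg hr _)) h.summable, h.tsum_eq]

lemma lintegral_one_sub_exp_neg_mul_add_lintegral {μ : Measure ℝ} (hμ : ∀ᵐ r ∂μ, 0 ≤ r)
    {t : ℝ} (ht₀ : 0 ≤ t) (ht₁ : t ≤ 1) :
    ∫⁻ r, ENNReal.ofReal (1 - exp (-((1 - t) * r))) ∂μ +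
        ∫⁻ r, ENNReal.ofReal (exp (-((1 - t) * r)) - exp (-r)) ∂μ =
      ∫⁻ r, ENNReal.ofReal (1 - exp (-r)) ∂μ := by
  rw [← lintegral_add_left (by fun_prop)]
  refine lintegral_congr_ae (hμ.mono fun r hr => ?_)
  dsimp only
  rw [← ENNReal.ofReal_add, sub_add_sub_cancel]
  · rw [sub_nonneg, exp_le_one_iff]; nlinarith
  · rw [sub_nonneg, exp_le_exp]; nlinarith

lemma ENNReal.hasSum_mul_toReal {α : Type*} {c : α → ℝ} (hc : ∀ i, 0 ≤ c i) {a : α → ℝ≥0∞}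
    (h : ∑' i, ENNReal.ofReal (c i) * a i ≠ ∞) :
    HasSum (fun i => c i * (a i).toReal) (∑' i, ENNReal.ofReal (c i) * a i).toReal := by
  rw [ENNReal.tsum_toReal_eq (ENNReal.ne_top_of_tsum_ne_top h)]
  refine (ENNReal.summable_toReal h).hasSum.congr_fun fun i => ?_
  rw [ENNReal.toReal_mul, ENNReal.toReal_ofReal (hc i)]

lemma hasSum_pow_mul_toReal_lintegral_poissonWeight {μ : Measure ℝ} (hμ : ∀ᵐ r ∂μ, 0 ≤ r)
    (hΓ : ∫⁻ r, ENNReal.ofReal (1 - exp (-r)) ∂μ ≠ ∞) {t : ℝ} (ht : t ∈ Set.Icc (0 : ℝ) 1) :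
    HasSum (fun j : ℕ => t ^ (j + 1) * (∫⁻ r, ENNReal.ofReal (poissonWeight (j + 1) r) ∂μ).toReal)
      ((∫⁻ r, ENNReal.ofReal (1 - exp (-r)) ∂μ).toReal -
        (∫⁻ r, ENNReal.ofReal (1 - exp (-((1 - t) * r))) ∂μ).toReal) := by
  have hsplit := lintegral_one_sub_exp_neg_mul_add_lintegral hμ ht.1 ht.2
  obtain ⟨hL, hK⟩ := ENNReal.add_ne_top.mp (hsplit.trans_ne hΓ)
  rw [← hsplit, ENNReal.toReal_add hL hK, add_sub_cancel_left,
    ← tsum_ofReal_pow_mul_lintegral_poissonWeight hμ ht.1]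
  exact ENNReal.hasSum_mul_toReal (fun j => pow_nonneg ht.1 _)
    ((tsum_ofReal_pow_mul_lintegral_poissonWeight hμ ht.1).trans_ne hK)

theorem compoundPoisson_representation_general (ρ : Measure ℝ)
    (γ : ℝ) (hγpos : 0 < γ)
    (hγ : γ = (∫⁻ r in Set.Ioi (0 : ℝ), ENNReal.ofReal (1 - Real.exp (-r)) ∂ρ).toReal)
    (pj : ℕ → ℝ)
    (hpj : ∀ j : ℕ, pj j =
      (∫⁻ r in Set.Ioi (0 : ℝ),
        ENNReal.ofReal (r ^ (j + 1) * Real.exp (-r) / (Nat.factorial (j + 1))) ∂ρ).toReal / γ) :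
    (∀ j : ℕ, pj j ∈ Set.Icc (0 : ℝ) 1) ∧
    (∑' j : ℕ, pj j = 1) ∧
    (∀ t : ℝ, t ∈ Set.Icc (0 : ℝ) 1 →
      Real.exp (γ * ((∑' j : ℕ, pj j * t ^ (j + 1)) - 1)) =
        Real.exp (-(∫⁻ r in Set.Ioi (0 : ℝ),
          ENNReal.ofReal (1 - Real.exp (-((1 - t) * r))) ∂ρ).toReal)) := by
  have hμ : ∀ᵐ r ∂ρ.restrict (Set.Ioi 0), 0 ≤ r :=
    ae_restrict_of_forall_mem measurableSet_Ioi fun r hr => le_of_lt hr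
  have hΓ : ∫⁻ r in Set.Ioi (0 : ℝ), ENNReal.ofReal (1 - exp (-r)) ∂ρ ≠ ∞ := fun h => by
    simp only [h, ENNReal.toReal_top] at hγ; linarith
  have hsum : ∀ t ∈ Set.Icc (0 : ℝ) 1, HasSum (fun j => pj j * t ^ (j + 1))
      ((γ - (∫⁻ r in Set.Ioi (0 : ℝ), ENNReal.ofReal (1 - exp (-((1 - t) * r))) ∂ρ).toReal) /
        γ) := by
    intro t ht
    have h := hasSum_pow_mul_toReal_lintegral_poissonWeight hμ hΓ ht
    rw [← hγ] at h
    refine (h.div_const γ).congr_fun fun j => ?_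
    simp only [hpj, poissonWeight]
    ring
  have hpj_nonneg : ∀ j, 0 ≤ pj j := fun j => by rw [hpj]; positivity
  have hpmf : HasSum pj 1 := by simpa [hγpos.ne'] using hsum 1 ⟨zero_le_one, le_rfl⟩
  refine ⟨fun j => ⟨hpj_nonneg j, le_hasSum hpmf j fun i _ => hpj_nonneg i⟩, hpmf.tsum_eq, ?_⟩
  intro t ht
  rw [(hsum t ht).tsum_eq]
  congr 1
  field_simp
  ring

/-- **Theorem 1 (Compound Poisson Process), analytic content**: with
`γ = ∫_0^∞ (1 − e^{−r}) dρ(r) ∈ (0,∞)` and `pj_j = (1/γ) ∫_0^∞ r^j e^{−r}/j! dρ(r)`,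
the `(pj_j)_{j ≥ 1}` form a probability mass function on the positive integers, and for
`t ∈ [0,1]` one has `exp{γ(∑_j pj_j t^j − 1)} = exp{−∫_0^∞ (1 − e^{−(1−t)r}) dρ(r)}`. -/
theorem compoundPoisson_representation (ρ : Measure ℝ)
    (hρ : ∫⁻ r in Set.Ioi (0 : ℝ), ENNReal.ofReal (min 1 r) ∂ρ ≠ ⊤)
    (γ : ℝ) (hγpos : 0 < γ)
    (hγ : γ = (∫⁻ r in Set.Ioi (0 : ℝ), ENNReal.ofReal (1 - Real.exp (-r)) ∂ρ).toReal)
    (hγfin : ∫⁻ r in Set.Ioi (0 : ℝ), ENNReal.ofReal (1 - Real.exp (-r)) ∂ρ ≠ ⊤)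
    (pj : ℕ → ℝ)
    (hpj : ∀ j : ℕ, pj j =
      (∫⁻ r in Set.Ioi (0 : ℝ),
        ENNReal.ofReal (r ^ (j + 1) * Real.exp (-r) / (Nat.factorial (j + 1))) ∂ρ).toReal / γ) :
    (∀ j : ℕ, pj j ∈ Set.Icc (0 : ℝ) 1) ∧
    (∑' j : ℕ, pj j = 1) ∧
    (∀ t : ℝ, t ∈ Set.Icc (0 : ℝ) 1 →
      Real.exp (γ * ((∑' j : ℕ, pj j * t ^ (j + 1)) - 1)) =
        Real.exp (-(∫⁻ r in Set.Ioi (0 : ℝ),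
          ENNReal.ofReal (1 - Real.exp (-((1 - t) * r))) ∂ρ).toReal)) :=
  compoundPoisson_representation_general ρ γ hγpos hγ pj hpj
end

section
/- Let a < 1 be real and define S_a(n,l) by the recursion in the context. Then for all integers 1 ≤ l ≤ n, S_a(n,l) = (n!/l!) · ∑ over all l-tuples (n_1, …, n_l) of positive integers with n_1 + ⋯ + n_l = n of ∏_{k=1}^l Γ(n_k − a)/(n_k! · Γ(1 − a)). -/
open Real Finset

/-- The numbers `S_a(n,l)` (generalized Stirling numbers up to the factor `a^{-l}`),
defined by `S_a(0,0) = 1`, `S_a(n,0) = 0` for `n ≥ 1`, `S_a(n,n) = 1`, and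
`S_a(n+1,l) = (n − a·l)·S_a(n,l) + S_a(n,l−1)` for `1 ≤ l ≤ n` (and `S_a(n,l) = 0`
for `l > n`). -/
noncomputable def Sgen (a : ℝ) : ℕ → ℕ → ℝ
  | 0, 0 => 1
  | 0, _ + 1 => 0
  | _ + 1, 0 => 0
  | n + 1, l + 1 => ((n : ℝ) - a * (l + 1)) * Sgen a n (l + 1) + Sgen a n l

/-- The single-variable weight `g(m) = Γ(m-a)/(m! Γ(1-a))` for `m ≥ 1`, `0` at `m = 0`. -/
noncomputable def gfun (a : ℝ) (m : ℕ) : ℝ :=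
  if m = 0 then 0
  else Real.Gamma ((m : ℝ) - a) / ((Nat.factorial m : ℝ) * Real.Gamma (1 - a))

/-- The composition sum `T(l,n) = ∑_{n_1+⋯+n_l = n} ∏ g(n_k)` (over nonnegative tuples;
tuples with a zero entry contribute `0`). -/
noncomputable def Tfun (a : ℝ) (l n : ℕ) : ℝ :=
  ∑ f ∈ Finset.Nat.antidiagonalTuple l n, ∏ k, gfun a (f k)

lemma gfun_rec (a : ℝ) (ha : a < 1) (m : ℕ) :
    ((m : ℝ) + 1) * gfun a (m + 1) =
      ((m : ℝ) - a) * gfun a m + (if m = 0 then 1 else 0) := by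
  have hΓ : Real.Gamma (1 - a) ≠ 0 :=
    ne_of_gt (Real.Gamma_pos_of_pos (by linarith))
  cases m with
  | zero =>
    simp only [gfun, Nat.cast_zero, if_pos rfl, if_neg one_ne_zero]
    rw [Nat.factorial_one]
    push_cast
    rw [one_mul, div_self hΓ]
    ring
  | succ m =>
    have hx : ((m : ℝ) + 1) - a ≠ 0 := by
      have : (0 : ℝ) < (m : ℝ) + 1 - a := by
        have : (m : ℝ) ≥ 0 := Nat.cast_nonneg m
        linarith
      linarith
    have hΓrec : Real.Gamma (((m : ℕ) + 2 : ℕ) - a)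
        = (((m : ℝ) + 1) - a) * Real.Gamma (((m : ℕ) + 1 : ℕ) - a) := by
      have := Real.Gamma_add_one hx
      push_cast
      rw [show ((m : ℝ) + 2) - a = (((m : ℝ) + 1) - a) + 1 by ring]
      convert this using 3 <;> push_cast <;> ring
    simp only [gfun, Nat.succ_ne_zero, if_neg, if_false]
    rw [show (m + 1 + 1 : ℕ) = m + 2 from rfl, hΓrec]
    have hfac : (Nat.factorial (m + 2) : ℝ) = ((m : ℝ) + 2) * (Nat.factorial (m + 1)) := by
      rw [Nat.factorial_succ]; push_cast; ring
    have hfacne : (Nat.factorial (m + 1) : ℝ) ≠ 0 := by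
      exact_mod_cast Nat.factorial_ne_zero (m + 1)
    rw [hfac]
    push_cast
    field_simp
    ring

/-- Product over `Fin (l+1)` split at coordinate `k`. -/
lemma prod_split (a : ℝ) (l : ℕ) (k : Fin (l + 1)) (f : Fin (l + 1) → ℕ) :
    ∏ j, gfun a (f j) = gfun a (f k) * ∏ i : Fin l, gfun a (f (k.succAbove i)) :=
  Fin.prod_univ_succAbove (fun j => gfun a (f j)) k

lemma sum_split (l : ℕ) (k : Fin (l + 1)) (f : Fin (l + 1) → ℕ) :
    ∑ j, f j = f k + ∑ i : Fin l, f (k.succAbove i) :=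
  Fin.sum_univ_succAbove f k

/-- The key recursion for `T`. -/
lemma Tfun_rec (a : ℝ) (ha : a < 1) (l n : ℕ) :
    ((n : ℝ) + 1) * Tfun a (l + 1) (n + 1) =
      ((n : ℝ) - a * ((l : ℝ) + 1)) * Tfun a (l + 1) n + ((l : ℝ) + 1) * Tfun a l n := by
  classical
  -- Step 1: distribute (n+1) = ∑ f k over each composition
  have step1 : ((n : ℝ) + 1) * Tfun a (l + 1) (n + 1) =
      ∑ k : Fin (l + 1), ∑ f ∈ Finset.Nat.antidiagonalTuple (l + 1) (n + 1),
        (f k : ℝ) * ∏ j, gfun a (f j) := by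
    rw [Tfun, Finset.mul_sum, Finset.sum_comm]
    refine Finset.sum_congr rfl fun f hf => ?_
    rw [Finset.Nat.mem_antidiagonalTuple] at hf
    rw [← Finset.sum_mul]
    congr 1
    rw [← Nat.cast_sum, hf]
    push_cast; ring
  -- Step 2: for each k, shift the k-th coordinate down by one
  have step2 : ∀ k : Fin (l + 1),
      ∑ f ∈ Finset.Nat.antidiagonalTuple (l + 1) (n + 1), (f k : ℝ) * ∏ j, gfun a (f j) =
      ∑ f ∈ Finset.Nat.antidiagonalTuple (l + 1) n,
        (((f k : ℝ) - a) * gfun a (f k) + (if f k = 0 then 1 else 0)) *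
          ∏ i : Fin l, gfun a (f (k.succAbove i)) := by
    intro k
    rw [← Finset.sum_filter_of_ne (p := fun f => f k ≠ 0)
      (fun f _ h => by
        intro hk
        exact h (by rw [hk] ; simp))]
    refine Finset.sum_nbij' (fun f => Function.update f k (f k - 1))
      (fun f => Function.update f k (f k + 1)) ?_ ?_ ?_ ?_ ?_
    · intro f hf
      rw [Finset.mem_filter, Finset.Nat.mem_antidiagonalTuple] at hf
      rw [Finset.Nat.mem_antidiagonalTuple, sum_split l k, Function.update_self,
        Finset.sum_congr rfl
          (fun i (_ : i ∈ Finset.univ) => Function.update_of_ne (Fin.succAbove_ne k i) (f k - 1) f)]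
      have h1 := sum_split l k f
      have h2 := hf.1
      have h3 := hf.2
      omega
    · intro f hf
      rw [Finset.Nat.mem_antidiagonalTuple] at hf
      rw [Finset.mem_filter, Finset.Nat.mem_antidiagonalTuple]
      constructor
      · rw [sum_split l k, Function.update_self,
          Finset.sum_congr rfl
            (fun i (_ : i ∈ Finset.univ) => Function.update_of_ne (Fin.succAbove_ne k i) (f k + 1) f)]
        have h1 := sum_split l k f
        omega
      · simp
    · intro f hf
      rw [Finset.mem_filter] at hf
      have h2 : f k ≠ 0 := hf.2
      rw [Function.update_idem, Function.update_self]
      rw [show f k - 1 + 1 = f k by omega]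
      exact Function.update_eq_self k f
    · intro f hf
      rw [Function.update_idem, Function.update_self, Nat.add_sub_cancel]
      exact Function.update_eq_self k f
    · intro f hf
      rw [Finset.mem_filter] at hf
      have h2 : f k ≠ 0 := hf.2
      obtain ⟨m, hm⟩ : ∃ m, f k = m + 1 := ⟨f k - 1, by omega⟩
      have hupd : ∀ i : Fin l,
          Function.update f k (f k - 1) (k.succAbove i) = f (k.succAbove i) :=
        fun i => Function.update_of_ne (Fin.succAbove_ne k i) _ f
      rw [prod_split a l k f, Function.update_self,
        show (∏ i : Fin l, gfun a (Function.update f k (f k - 1) (k.succAbove i)))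
          = ∏ i : Fin l, gfun a (f (k.succAbove i)) from
          Finset.prod_congr rfl (fun i _ => congrArg _ (hupd i)),
        hm, Nat.add_sub_cancel]
      have hg := gfun_rec a ha m
      push_cast at hg ⊢
      linear_combination (∏ i : Fin l, gfun a (f (k.succAbove i))) * hg
    -- end nbij'
  rw [step1]
  rw [Finset.sum_congr rfl (fun k _ => step2 k)]
  -- split the sum into the main part and the delta part
  have split : ∀ k : Fin (l + 1),
      ∑ f ∈ Finset.Nat.antidiagonalTuple (l + 1) n,
        (((f k : ℝ) - a) * gfun a (f k) + (if f k = 0 then 1 else 0)) *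
          ∏ i : Fin l, gfun a (f (k.succAbove i))
      = (∑ f ∈ Finset.Nat.antidiagonalTuple (l + 1) n,
          ((f k : ℝ) - a) * ∏ j, gfun a (f j)) + Tfun a l n := by
    intro k
    have : ∀ f ∈ Finset.Nat.antidiagonalTuple (l + 1) n,
        (((f k : ℝ) - a) * gfun a (f k) + (if f k = 0 then 1 else 0)) *
            ∏ i : Fin l, gfun a (f (k.succAbove i))
        = ((f k : ℝ) - a) * ∏ j, gfun a (f j)
          + (if f k = 0 then ∏ i : Fin l, gfun a (f (k.succAbove i)) else 0) := by
      intro f _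
      rw [prod_split a l k, add_mul, ite_mul, one_mul, zero_mul]
      ring_nf
    rw [Finset.sum_congr rfl this, Finset.sum_add_distrib]
    congr 1
    -- the delta part equals Tfun a l n
    rw [← Finset.sum_filter]
    rw [Tfun]
    refine Finset.sum_nbij' (fun f => fun i => f (k.succAbove i))
      (fun h => k.insertNth 0 h) ?_ ?_ ?_ ?_ ?_
    · intro f hf
      rw [Finset.mem_filter, Finset.Nat.mem_antidiagonalTuple] at hf
      rw [Finset.Nat.mem_antidiagonalTuple]
      have h1 := sum_split l k f
      have h2 := hf.1
      have h3 := hf.2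
      omega
    · intro h hh
      rw [Finset.Nat.mem_antidiagonalTuple] at hh
      rw [Finset.mem_filter, Finset.Nat.mem_antidiagonalTuple]
      refine ⟨?_, by simp⟩
      rw [sum_split l k]
      simp [hh]
    · intro f hf
      rw [Finset.mem_filter] at hf
      have h0 : f k = 0 := hf.2
      have h := Fin.insertNth_self_removeNth k f
      rw [h0] at h
      exact h
    · intro h hh
      funext i
      simp
    · intro f hf
      rfl
  rw [Finset.sum_congr rfl (fun k _ => split k), Finset.sum_add_distrib]
  rw [Finset.sum_const, Finset.card_univ, Fintype.card_fin]
  rw [Finset.sum_comm]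
  have main : ∑ f ∈ Finset.Nat.antidiagonalTuple (l + 1) n, ∑ k : Fin (l + 1),
      ((f k : ℝ) - a) * ∏ j, gfun a (f j)
      = ((n : ℝ) - a * ((l : ℝ) + 1)) * Tfun a (l + 1) n := by
    rw [Tfun, Finset.mul_sum]
    refine Finset.sum_congr rfl fun f hf => ?_
    rw [Finset.Nat.mem_antidiagonalTuple] at hf
    rw [← Finset.sum_mul]
    congr 1
    rw [Finset.sum_sub_distrib, Finset.sum_const, Finset.card_univ, Fintype.card_fin,
      ← Nat.cast_sum, hf]
    push_cast; ring
  rw [main, nsmul_eq_mul]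
  push_cast
  ring

lemma Sgen_eq_Tfun (a : ℝ) (ha : a < 1) : ∀ n l : ℕ,
    Sgen a n l = ((Nat.factorial n : ℝ) / (Nat.factorial l : ℝ)) * Tfun a l n := by
  intro n
  induction n with
  | zero =>
    intro l
    cases l with
    | zero =>
      simp [Sgen, Tfun, Finset.Nat.antidiagonalTuple_zero_zero]
    | succ l =>
      rw [show Sgen a 0 (l + 1) = 0 from rfl]
      rw [Tfun, Finset.Nat.antidiagonalTuple_zero_right]
      simp [gfun]
  | succ n ih =>
    intro l
    cases l with
    | zero =>
      rw [show Sgen a (n + 1) 0 = 0 from rfl]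
      have : Finset.Nat.antidiagonalTuple 0 (n + 1) = ∅ :=
        Finset.Nat.antidiagonalTuple_zero_succ n
      rw [Tfun, this]
      simp
    | succ l =>
      have hrec := Tfun_rec a ha l n
      rw [show Sgen a (n + 1) (l + 1)
        = ((n : ℝ) - a * ((l : ℕ) + 1)) * Sgen a n (l + 1) + Sgen a n l from rfl]
      rw [ih (l + 1), ih l]
      have hfn : (Nat.factorial (n + 1) : ℝ) = ((n : ℝ) + 1) * (Nat.factorial n) := by
        rw [Nat.factorial_succ]; push_cast; ring
      have hfl : (Nat.factorial (l + 1) : ℝ) = ((l : ℝ) + 1) * (Nat.factorial l) := by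
        rw [Nat.factorial_succ]; push_cast; ring
      have hn1 : ((n : ℝ) + 1) ≠ 0 := by positivity
      have hl1 : ((l : ℝ) + 1) ≠ 0 := by positivity
      have hfln : (Nat.factorial l : ℝ) ≠ 0 := by exact_mod_cast Nat.factorial_ne_zero l
      have hfnn : (Nat.factorial n : ℝ) ≠ 0 := by exact_mod_cast Nat.factorial_ne_zero n
      have hT : Tfun a (l + 1) (n + 1) =
          (((n : ℝ) - a * ((l : ℝ) + 1)) * Tfun a (l + 1) n + ((l : ℝ) + 1) * Tfun a l n)
            / ((n : ℝ) + 1) := by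
        rw [eq_div_iff hn1, mul_comm]
        exact hrec
      rw [hT, hfn, hfl]
      push_cast
      field_simp

/-- **Equation (F.3)**: for `a < 1` and `1 ≤ l ≤ n`,
`S_a(n,l) = (n!/l!) ∑_{(n_1,…,n_l) positive, ∑ n_k = n} ∏_k Γ(n_k − a)/(n_k! Γ(1−a))`. -/
theorem Sgen_eq_sum_over_compositions (a : ℝ) (ha : a < 1) (n l : ℕ)
    (hl : 1 ≤ l) (hln : l ≤ n) :
    Sgen a n l =
      ((Nat.factorial n : ℝ) / (Nat.factorial l : ℝ)) *
        ∑ f ∈ (Fintype.piFinset fun _ : Fin l => Finset.Icc 1 n).filter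
            (fun f => ∑ k, f k = n),
          ∏ k, Real.Gamma ((f k : ℝ) - a) /
            ((Nat.factorial (f k) : ℝ) * Real.Gamma (1 - a)) := by
  classical
  rw [Sgen_eq_Tfun a ha n l]
  congr 1
  rw [Tfun]
  rw [← Finset.sum_subset (s₁ := (Fintype.piFinset fun _ : Fin l => Finset.Icc 1 n).filter
      (fun f => ∑ k, f k = n)) (s₂ := Finset.Nat.antidiagonalTuple l n) ?_ ?_]
  · refine Finset.sum_congr rfl fun f hf => ?_
    rw [Finset.mem_filter, Fintype.mem_piFinset] at hf
    refine Finset.prod_congr rfl fun k _ => ?_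
    have hk := hf.1 k
    rw [Finset.mem_Icc] at hk
    rw [gfun, if_neg (by omega)]
  · intro f hf
    rw [Finset.mem_filter, Fintype.mem_piFinset] at hf
    rw [Finset.Nat.mem_antidiagonalTuple]
    exact hf.2
  · intro f hf hnf
    rw [Finset.Nat.mem_antidiagonalTuple] at hf
    have : ∃ k, f k ∉ Finset.Icc 1 n := by
      by_contra h
      push_neg at h
      exact hnf (Finset.mem_filter.mpr ⟨Fintype.mem_piFinset.mpr h, hf⟩)
    obtain ⟨k, hk⟩ := this
    rw [Finset.mem_Icc] at hk
    have hle : f k ≤ n := by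
      calc f k ≤ ∑ i, f i := Finset.single_le_sum (fun i _ => Nat.zero_le _) (Finset.mem_univ k)
      _ = n := hf
    have h0 : f k = 0 := by omega
    refine Finset.prod_eq_zero (Finset.mem_univ k) ?_
    rw [h0, gfun, if_pos rfl]
end

section
/- Let a < 1 with a ≠ 0 and define S_a(n,l) by the recursion in the context. Then for all integers 1 ≤ l ≤ n, S_a(n,l) = (1/(l! · a^l)) · ∑_{k=0}^{l} (−1)^k · C(l,k) · ∏_{i=0}^{n−1} (i − a·k), where C(l,k) is the binomial coefficient. -/
open Real Finset

/-- The alternating sum appearing on the right-hand side of formula (F.3). -/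
noncomputable def Fgen (a : ℝ) (n l : ℕ) : ℝ :=
  ∑ k ∈ Finset.range (l + 1),
    (-1 : ℝ) ^ k * (Nat.choose l k : ℝ) * ∏ i ∈ Finset.range n, ((i : ℝ) - a * k)

/-- The alternating sum satisfies the same recursion as `l! a^l · Sgen`. -/
lemma Fgen_rec (a : ℝ) (n l : ℕ) :
    Fgen a (n+1) (l+1) = ((n : ℝ) - a * (l+1)) * Fgen a n (l+1)
      + a * (l+1) * Fgen a n l := by
  have key : ∀ k ∈ Finset.range (l+2),
      (-1 : ℝ) ^ k * (Nat.choose (l+1) k : ℝ) * ∏ i ∈ Finset.range (n+1), ((i : ℝ) - a * k)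
      = ((n : ℝ) - a * (l+1)) * ((-1:ℝ)^k * (Nat.choose (l+1) k : ℝ) * ∏ i ∈ Finset.range n, ((i:ℝ) - a*k))
        + a * (l+1) * ((-1:ℝ)^k * (Nat.choose l k : ℝ) * ∏ i ∈ Finset.range n, ((i:ℝ) - a*k)) := by
    intro k hk
    rw [Finset.mem_range] at hk
    have hk' : k ≤ l + 1 := Nat.lt_succ_iff.mp hk
    have hc : ((Nat.choose (l+1) k : ℝ)) * (((l:ℝ)+1) - k) = ((l:ℝ)+1) * (Nat.choose l k : ℝ) := by
      have h := Nat.choose_mul_succ_eq l k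
      have h2 : ((l.choose k * (l + 1) : ℕ) : ℝ) = (((l+1).choose k * (l + 1 - k) : ℕ) : ℝ) := by
        exact_mod_cast congrArg (Nat.cast : ℕ → ℝ) h
      push_cast [Nat.cast_sub hk'] at h2
      linarith
    rw [Finset.prod_range_succ]
    linear_combination ((-1:ℝ)^k * (∏ i ∈ Finset.range n, ((i:ℝ) - a*k)) * a) * hc
  unfold Fgen
  rw [Finset.sum_congr rfl key, Finset.sum_add_distrib, ← Finset.mul_sum, ← Finset.mul_sum,
    Finset.sum_range_succ (fun k => (-1:ℝ)^k * (Nat.choose l k : ℝ) * ∏ i ∈ Finset.range n, ((i:ℝ) - a*k)) (l+1)]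
  simp [Nat.choose_succ_self]

/-- The unconditional identity `l! · a^l · S_a(n,l) = Fgen a n l`. -/
lemma Sgen_mul_eq_Fgen (a : ℝ) : ∀ n l : ℕ,
    (Nat.factorial l : ℝ) * a ^ l * Sgen a n l = Fgen a n l := by
  intro n
  induction n with
  | zero =>
    intro l
    match l with
    | 0 => simp [Sgen, Fgen]
    | m + 1 =>
      have h := Int.alternating_sum_range_choose (n := m + 1)
      simp only [Nat.succ_ne_zero, if_false] at h
      have h2 : (∑ i ∈ Finset.range (m + 2), (-1:ℝ)^i * ((m+1).choose i : ℝ)) = 0 := by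
        exact_mod_cast congrArg (Int.cast : ℤ → ℝ) h
      simp only [Sgen, Fgen, Finset.prod_range_zero, mul_one, mul_zero]
      rw [h2]
  | succ n ih =>
    intro l
    match l with
    | 0 =>
      simp only [Sgen, Fgen, mul_zero]
      rw [eq_comm, Finset.sum_range_one]
      apply mul_eq_zero_of_right
      exact Finset.prod_eq_zero (Finset.mem_range.mpr (Nat.succ_pos n)) (by simp)
    | m + 1 =>
      have hS : Sgen a (n+1) (m+1)
          = ((n : ℝ) - a * (m + 1)) * Sgen a n (m + 1) + Sgen a n m := rfl
      rw [hS, Fgen_rec, ← ih (m+1), ← ih m]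
      push_cast [Nat.factorial_succ]
      ring

/-- **Alternating-sum formula (F.3)** for the generalized Stirling numbers: for `a < 1`,
`a ≠ 0`, and `1 ≤ l ≤ n`,
`S_a(n,l) = (1/(l! a^l)) ∑_{k=0}^l (−1)^k C(l,k) ∏_{i=0}^{n−1} (i − a k)`,
where `∏_{i=0}^{n−1}(i − ak)` interprets `Γ(n − ak)/Γ(−ak)`. -/
theorem Sgen_alternating_sum (a : ℝ) (ha : a < 1) (ha0 : a ≠ 0) (n l : ℕ)
    (hl : 1 ≤ l) (hln : l ≤ n) :
    Sgen a n l =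
      (1 / ((Nat.factorial l : ℝ) * a ^ l)) *
        ∑ k ∈ Finset.range (l + 1),
          (-1 : ℝ) ^ k * (Nat.choose l k : ℝ) *
            ∏ i ∈ Finset.range n, ((i : ℝ) - a * k) := by
  have h := Sgen_mul_eq_Fgen a n l
  have hfac : (Nat.factorial l : ℝ) ≠ 0 := Nat.cast_ne_zero.mpr (Nat.factorial_ne_zero l)
  have hpow : a ^ l ≠ 0 := pow_ne_zero l ha0
  rw [Fgen] at h
  field_simp
  linarith [h]
end

section
/- Let a < 1 with a ≠ 0, γ_0 > 0, and p ∈ (0,1), and define S_a(n,l) by the recursion in the context. Define p_N(n) = (p^n/n!) · exp{−γ_0 (1 − (1−p)^a)/(a p^a)} · ∑_{l=0}^{n} γ_0^l p^{−a l} S_a(n,l) for n = 0, 1, 2, …. Then p_N(n) ≥ 0 for all n and ∑_{n=0}^∞ p_N(n) = 1, i.e. p_N is a probability mass function on the nonnegative integers (the generalized negative binomial distribution gNB(γ_0, a, p)). -/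
open Real Finset

open Polynomial

/-!
Writing `(x)_n` for the rising factorial, the closed form
`a^l l! S_a(n,l) = ∑_j (-1)^j C(l,j) (-aj)_n` together with the binomial series
`∑_n (-c)_n x^n / n! = (1 - x)^c` gives the column generating function
`∑_n S_a(n,l) x^n / n! = ((1 - (1 - x)^a) / a)^l / l!`. Hence the nonnegative double series
`∑_{n,l} γ₀^l p^{-al} S_a(n,l) p^n / n!`, summed over `n` first, equals
`exp (γ₀ p^{-a} (1 - (1 - p)^a) / a)`, the reciprocal of the normalising factor of `p_N`.
-/

lemma Sgen_succ_succ (a : ℝ) (n l : ℕ) :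
    Sgen a (n + 1) (l + 1) = ((n : ℝ) - a * (l + 1)) * Sgen a n (l + 1) + Sgen a n l := rfl

lemma Sgen_eq_zero_of_lt {a : ℝ} {n l : ℕ} (h : n < l) : Sgen a n l = 0 := by
  induction n generalizing l with
  | zero => obtain ⟨l, rfl⟩ := Nat.exists_eq_add_one_of_ne_zero h.ne'; rfl
  | succ n ih =>
    obtain ⟨l, rfl⟩ := Nat.exists_eq_add_one_of_ne_zero (Nat.zero_lt_of_lt h).ne'
    rw [Sgen_succ_succ, ih (by omega), ih (by omega), mul_zero, zero_add]

lemma Sgen_nonneg {a : ℝ} (ha : a ≤ 1) (n l : ℕ) : 0 ≤ Sgen a n l := by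
  induction n generalizing l with
  | zero => cases l <;> simp [Sgen]
  | succ n ih =>
    cases l with
    | zero => simp [Sgen]
    | succ l =>
      rw [Sgen_succ_succ]
      rcases le_or_gt (l + 1) n with hle | hlt
      · have hle' : (l + 1 : ℝ) ≤ n := by exact_mod_cast hle
        have : a * (l + 1) ≤ n := by nlinarith
        exact add_nonneg (mul_nonneg (by linarith) (ih _)) (ih _)
      · rw [Sgen_eq_zero_of_lt hlt, mul_zero, zero_add]
        exact ih l

lemma sum_neg_one_pow_mul_choose_succ_mul_sub {R : Type*} [CommRing R] (u : ℕ → R) (l : ℕ) :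
    ∑ j ∈ range (l + 2), (-1) ^ j * ((l + 1).choose j : R) * ((l + 1 : R) - j) * u j =
      (l + 1) * ∑ j ∈ range (l + 1), (-1) ^ j * (l.choose j : R) * u j := by
  rw [sum_range_succ, Nat.cast_succ l, sub_self, mul_zero, zero_mul, add_zero, mul_sum]
  refine sum_congr rfl fun j hj => ?_
  have hjl : j ≤ l + 1 := by have := mem_range.1 hj; omega
  have key : (l.choose j : R) * (l + 1) = (l + 1).choose j * ((l + 1 : R) - j) := by
    have h := congrArg (Nat.cast (R := R)) (Nat.choose_mul_succ_eq l j)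
    push_cast [Nat.cast_sub hjl] at h
    exact h
  linear_combination (-1) ^ j * u j * key.symm

lemma Sgen_closed_form (a : ℝ) (n l : ℕ) :
    a ^ l * l.factorial * Sgen a n l =
      ∑ j ∈ range (l + 1), (-1) ^ j * (l.choose j : ℝ) * (ascPochhammer ℝ n).eval (-(a * j)) := by
  induction n generalizing l with
  | zero =>
    cases l with
    | zero => simp [Sgen]
    | succ l =>
      have := Int.alternating_sum_range_choose_of_ne l.succ_ne_zero
      simp only [Sgen, mul_zero, ascPochhammer_zero, eval_one, mul_one]
      exact_mod_cast this.symm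
  | succ n ih =>
    cases l with
    | zero => simp [Sgen, ascPochhammer_ne_zero_eval_zero]
    | succ l =>
      calc a ^ (l + 1) * (l + 1).factorial * Sgen a (n + 1) (l + 1)
          = (n - a * (l + 1)) * (a ^ (l + 1) * (l + 1).factorial * Sgen a n (l + 1)) +
              a * ((l + 1) * (a ^ l * l.factorial * Sgen a n l)) := by
            rw [Sgen_succ_succ, Nat.factorial_succ]; push_cast; ring
        _ = (n - a * (l + 1)) * ∑ j ∈ range (l + 2), (-1) ^ j * ((l + 1).choose j : ℝ) *
                (ascPochhammer ℝ n).eval (-(a * j)) +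
              a * ∑ j ∈ range (l + 2), (-1) ^ j * ((l + 1).choose j : ℝ) * ((l + 1 : ℝ) - j) *
                (ascPochhammer ℝ n).eval (-(a * j)) := by
            rw [ih, ih, sum_neg_one_pow_mul_choose_succ_mul_sub]
        _ = _ := by
            rw [mul_sum, mul_sum, ← sum_add_distrib]
            refine sum_congr rfl fun j _ => ?_
            rw [ascPochhammer_succ_eval]
            ring

lemma hasSum_ringChoose_mul_pow (c : ℝ) {x : ℝ} (hx : |x| < 1) :
    HasSum (fun n => Ring.choose c n * x ^ n) ((1 + x) ^ c) := by
  have hx' : ‖x‖ₑ < 1 := by simpa [enorm_eq_nnnorm, ← NNReal.coe_lt_coe] using hx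
  simpa [binomialSeries, FormalMultilinearSeries.ofScalars] using
    one_add_rpow_hasFPowerSeriesOnBall_zero.hasSum (Metric.mem_eball.2 (by simpa using hx'))

lemma ascPochhammer_eval_neg_eq_ringChoose (c : ℝ) (n : ℕ) :
    (ascPochhammer ℝ n).eval (-c) = (-1) ^ n * n.factorial * Ring.choose c n := by
  rw [ascPochhammer_eval_neg_eq_descPochhammer, Ring.choose_eq_smul, smul_eq_mul,
    ← aeval_eq_smeval, ← eval_map_algebraMap, descPochhammer_map]
  field_simp

lemma hasSum_ascPochhammer_eval_neg_mul_pow_div_factorial (c : ℝ) {x : ℝ} (hx : |x| < 1) :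
    HasSum (fun n => (ascPochhammer ℝ n).eval (-c) * x ^ n / n.factorial) ((1 - x) ^ c) := by
  convert hasSum_ringChoose_mul_pow c (x := -x) (by rwa [abs_neg]) using 1
  · ext n
    rw [ascPochhammer_eval_neg_eq_ringChoose, neg_pow x]
    field_simp
  · rw [sub_eq_add_neg]

lemma hasSum_Sgen_mul_pow_div_factorial {a x : ℝ} (ha : a ≠ 0) (hx : |x| < 1) (l : ℕ) :
    HasSum (fun n => Sgen a n l * x ^ n / n.factorial)
      (((1 - (1 - x) ^ a) / a) ^ l / l.factorial) := by
  have h1x : 0 ≤ 1 - x := by linarith [le_abs_self x]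
  have hterm : ∀ j ∈ range (l + 1), HasSum
      (fun n => (-1) ^ j * (l.choose j : ℝ) *
        ((ascPochhammer ℝ n).eval (-(a * j)) * x ^ n / n.factorial))
      ((-1) ^ j * l.choose j * ((1 - x) ^ a) ^ j) := fun j _ => by
    rw [← rpow_mul_natCast h1x]
    exact (hasSum_ascPochhammer_eval_neg_mul_pow_div_factorial _ hx).mul_left _
  have hbinom : ∑ j ∈ range (l + 1), (-1) ^ j * (l.choose j : ℝ) * ((1 - x) ^ a) ^ j =
      (1 - (1 - x) ^ a) ^ l := by
    rw [show 1 - (1 - x) ^ a = -(1 - x) ^ a + 1 by ring, add_pow]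
    refine sum_congr rfl fun j _ => ?_
    rw [neg_pow, one_pow]
    ring
  have hal : a ^ l * l.factorial ≠ 0 := by positivity
  have hfun : (fun n => Sgen a n l * x ^ n / n.factorial) = fun n => (a ^ l * l.factorial)⁻¹ *
      ∑ j ∈ range (l + 1), (-1) ^ j * (l.choose j : ℝ) *
        ((ascPochhammer ℝ n).eval (-(a * j)) * x ^ n / n.factorial) := by
    ext n
    rw [eq_inv_mul_iff_mul_eq₀ hal, ← mul_div_assoc, ← mul_assoc, mul_assoc _ (Sgen a n l),
      ← mul_assoc, Sgen_closed_form, sum_mul, sum_div]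
    exact sum_congr rfl fun j _ => by ring
  have hval : ((1 - (1 - x) ^ a) / a) ^ l / l.factorial =
      (a ^ l * l.factorial)⁻¹ * ((1 - (1 - x) ^ a) ^ l) := by
    rw [div_pow]
    field_simp
  rw [hfun, hval, ← hbinom]
  exact (hasSum_sum hterm).mul_left _

lemma hasSum_tsum_swap_of_nonneg {β γ : Type*} {f : β → γ → ℝ} (hf : ∀ b c, 0 ≤ f b c)
    {g : β → ℝ} {s : ℝ} (hg : ∀ b, HasSum (f b) (g b)) (hs : HasSum g s) :
    HasSum (fun c => ∑' b, f b c) s := by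
  have hF : Summable (Function.uncurry f) :=
    (summable_prod_of_nonneg fun q => hf q.1 q.2).2
      ⟨fun b => (hg b).summable, by
        simpa only [Function.uncurry_apply_pair, (hg _).tsum_eq] using hs.summable⟩
  have hFs : HasSum (Function.uncurry f) s := by
    rw [hF.hasSum_iff]
    exact (hF.hasSum.prod_fiberwise hg).unique hs
  have hswap : HasSum (fun q : γ × β => f q.2 q.1) s := (Equiv.prodComm γ β).hasSum_iff.2 hFs
  exact hswap.prod_fiberwise fun c => (hF.prod_symm.prod_factor c).hasSum

/-- **Equation (3.1)**: the generalized negative binomial distribution `gNB(γ₀, a, p)`,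
`p_N(n) = (p^n/n!) e^{−γ₀(1−(1−p)^a)/(a p^a)} ∑_{l=0}^n γ₀^l p^{−al} S_a(n,l)`,
is a probability mass function on the nonnegative integers. -/
theorem gNB_is_pmf (a γ₀ p : ℝ) (ha : a < 1) (ha0 : a ≠ 0)
    (hγ : 0 < γ₀) (hp : p ∈ Set.Ioo (0 : ℝ) 1)
    (pN : ℕ → ℝ)
    (hpN : ∀ n : ℕ, pN n =
      p ^ n / (Nat.factorial n : ℝ) *
        Real.exp (-(γ₀ * (1 - (1 - p) ^ a) / (a * p ^ a))) *
        ∑ l ∈ Finset.range (n + 1), γ₀ ^ l * p ^ (-(a * l)) * Sgen a n l) :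
    (∀ n : ℕ, 0 ≤ pN n) ∧ (∑' n : ℕ, pN n = 1) := by
  obtain ⟨hp0, hp1⟩ := hp
  set E := Real.exp (-(γ₀ * (1 - (1 - p) ^ a) / (a * p ^ a)))
  set θ := γ₀ * p ^ (-a) * ((1 - (1 - p) ^ a) / a) with hθ
  set f : ℕ → ℕ → ℝ := fun l n => γ₀ ^ l * p ^ (-(a * l)) * (Sgen a n l * p ^ n / n.factorial)
  have hf : ∀ l n, 0 ≤ f l n := fun l n => by
    have := Sgen_nonneg ha.le n l
    positivity
  have hpN' : ∀ n, pN n = E * ∑' l, f l n := fun n => by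
    rw [hpN, tsum_eq_sum (s := range (n + 1)) fun l hl => by
      simp [f, Sgen_eq_zero_of_lt (not_lt.1 (mt mem_range.2 hl))], mul_sum, mul_sum]
    exact sum_congr rfl fun l _ => by ring
  have hrow : ∀ l, HasSum (f l) (θ ^ l / l.factorial) := fun l => by
    have hval : γ₀ ^ l * p ^ (-(a * l)) * (((1 - (1 - p) ^ a) / a) ^ l / l.factorial) =
        θ ^ l / l.factorial := by
      rw [← neg_mul, rpow_mul_natCast hp0.le, hθ, mul_pow, mul_pow]
      ring
    rw [← hval]
    exact (hasSum_Sgen_mul_pow_div_factorial ha0 (abs_lt.2 ⟨by linarith, hp1⟩) l).mul_left _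
  have hexp : HasSum (fun l => θ ^ l / l.factorial) (Real.exp θ) := by
    rw [exp_eq_exp_ℝ]
    exact NormedSpace.expSeries_div_hasSum_exp θ
  have hEθ : E * Real.exp θ = 1 := by
    rw [← exp_add, exp_eq_one_iff, hθ, rpow_neg hp0.le]
    field_simp
    ring
  refine ⟨fun n => hpN' n ▸ mul_nonneg (exp_pos _).le (tsum_nonneg (hf · n)), ?_⟩
  rw [tsum_congr hpN', tsum_mul_left, (hasSum_tsum_swap_of_nonneg hf hrow hexp).tsum_eq, hEθ]
end

section
/- Let a < 1 with a ≠ 0, γ_0 > 0, and p ∈ (0,1), and define S_a(n,l) and p_N(n) as in the context. Then for every t ∈ [0,1], ∑_{n=0}^∞ p_N(n) · t^n = exp{ −γ_0 · ((1 − p t)^a − (1 − p)^a) / (a p^a) }. -/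
open Real Finset

/-!
Put `φ(x) = (1 - (1 - x)^a) / a`. By the binomial series, `φ(x) = ∑ φₙ xⁿ / n!` for `|x| < 1`
with `φₙ = Γ(n - a) / Γ(1 - a) = S_a(n, 1)`. The recursion for `S_a` is equivalent to the
convolution `(l + 1) S_a(n, l + 1) = ∑ (n choose i) S_a(i, l) φ_{n-i}`, i.e. to
`φ^{l+1} / (l + 1)! = (φ^l / l!) · φ / (l + 1)` on exponential generating functions, so
`∑ₙ S_a(n, l) xⁿ / n! = φ(x)^l / l!`. For `a < 1` everything is nonnegative, and summing over `l`
gives `∑ₙ (xⁿ / n!) ∑ₗ cˡ S_a(n, l) = exp (c φ(x))`. With `c = γ₀ p^{-a}` and `x = p t`, the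
normalising factor of `p_N` is `exp (-c φ(p))`, so the series of the claim is
`exp (c (φ(p t) - φ(p)))`.
-/

namespace GNB

noncomputable def phi (a x : ℝ) : ℝ := (1 - (1 - x) ^ a) / a

noncomputable def phiCoeff (a : ℝ) : ℕ → ℝ
  | 0 => 0
  | n + 1 => ∏ j ∈ range n, ((j : ℝ) + 1 - a)

lemma phiCoeff_succ (a : ℝ) (n : ℕ) :
    phiCoeff a (n + 1) = ((n : ℝ) - a) * phiCoeff a n + if n = 0 then 1 else 0 := by
  cases n with
  | zero => simp [phiCoeff]
  | succ n => simp [phiCoeff, prod_range_succ, mul_comm]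

lemma phiCoeff_nonneg {a : ℝ} (ha : a < 1) (n : ℕ) : 0 ≤ phiCoeff a n := by
  cases n with
  | zero => exact le_rfl
  | succ n => exact prod_nonneg fun j _ => by linarith [(j.cast_nonneg : (0 : ℝ) ≤ j)]

lemma factorial_mul_choose_eq_prod (a : ℝ) (n : ℕ) :
    (n.factorial : ℝ) * Ring.choose a n = ∏ j ∈ range n, (a - j) := by
  rw [Ring.choose_eq_smul, smul_eq_mul, ← mul_assoc, mul_inv_cancel₀ (by positivity), one_mul,
    ← descPochhammer_eval_eq_prod_range, ← Polynomial.aeval_eq_smeval, Polynomial.aeval_def,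
    ← Polynomial.eval_map, descPochhammer_map]

lemma mul_phiCoeff_succ (a : ℝ) (n : ℕ) :
    a * phiCoeff a (n + 1) = (-1) ^ n * ((n + 1).factorial * Ring.choose a (n + 1)) := by
  have hfactor (k : ℕ) : (k : ℝ) + 1 - a = -1 * (a - ((k + 1 : ℕ) : ℝ)) := by push_cast; ring
  rw [factorial_mul_choose_eq_prod, prod_range_succ', phiCoeff]
  simp only [hfactor, prod_mul_distrib, prod_const, card_range, Nat.cast_zero, sub_zero]
  ring

lemma hasSum_one_add_rpow (a : ℝ) {x : ℝ} (hx : |x| < 1) :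
    HasSum (fun n => Ring.choose a n * x ^ n) ((1 + x) ^ a) := by
  have := Real.one_add_rpow_hasFPowerSeriesOnBall_zero (a := a) |>.hasSum (y := x)
    (by simpa [Real.enorm_eq_ofReal_abs] using hx)
  simpa [binomialSeries, FormalMultilinearSeries.ofScalars_apply_eq, mul_comm] using this

lemma hasSum_phiCoeff {a x : ℝ} (ha : a ≠ 0) (hx : |x| < 1) :
    HasSum (fun n => phiCoeff a n * x ^ n / n.factorial) (phi a x) := by
  have h := hasSum_one_add_rpow a (x := -x) (by rwa [abs_neg])
  rw [← hasSum_nat_add_iff' 1] at h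
  rw [← hasSum_nat_add_iff' 1]
  simp only [sum_range_one, Ring.choose_zero_right, pow_zero, mul_one] at h
  simp only [sum_range_one, phiCoeff.eq_1, zero_mul, zero_div, sub_zero]
  have hterm (n : ℕ) : phiCoeff a (n + 1) * x ^ (n + 1) / (n + 1).factorial
      = -(Ring.choose a (n + 1) * (-x) ^ (n + 1)) / a := by
    have hf : ((n + 1).factorial : ℝ) ≠ 0 := by positivity
    rw [neg_pow, pow_succ (-1 : ℝ)]
    field_simp
    linear_combination x ^ (n + 1) * mul_phiCoeff_succ a n
  have hphi : phi a x = -((1 + -x) ^ a - 1) / a := by rw [phi, ← sub_eq_add_neg, neg_sub]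
  exact hphi ▸ (h.neg.div_const a).congr_fun hterm

section Sgen

variable (a : ℝ)

lemma Sgen_zero_right (n : ℕ) : Sgen a n 0 = if n = 0 then 1 else 0 := by cases n <;> rfl

lemma Sgen_zero_succ (l : ℕ) : Sgen a 0 (l + 1) = 0 := rfl

lemma Sgen_succ_succ (n l : ℕ) :
    Sgen a (n + 1) (l + 1) = ((n : ℝ) - a * (l + 1)) * Sgen a n (l + 1) + Sgen a n l := rfl

lemma Sgen_eq_zero_of_lt {n l : ℕ} (h : n < l) : Sgen a n l = 0 := by
  induction n generalizing l with
  | zero => obtain ⟨l, rfl⟩ := Nat.exists_eq_add_of_lt h; rfl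
  | succ n ih =>
    obtain ⟨l, rfl⟩ := Nat.exists_eq_add_of_lt (Nat.zero_lt_of_lt h)
    rw [Sgen_succ_succ, ih (by omega), ih (by omega), mul_zero, add_zero]

lemma Sgen_one (n : ℕ) : Sgen a n 1 = phiCoeff a n := by
  induction n with
  | zero => rfl
  | succ n ih => rw [Sgen_succ_succ, ih, Sgen_zero_right, phiCoeff_succ]; push_cast; ring

lemma add_one_mul_Sgen_succ (n l : ℕ) :
    ((l : ℝ) + 1) * Sgen a n (l + 1) =
      ∑ ij ∈ antidiagonal n, (n.choose ij.1 : ℝ) * (Sgen a ij.1 l * phiCoeff a ij.2) := by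
  induction n generalizing l with
  | zero => simp [Sgen_zero_succ, phiCoeff]
  | succ n ih =>
    cases l with
    | zero => simp [Nat.sum_antidiagonal_succ, Sgen_one, Sgen_zero_right]
    | succ m =>
      rw [sum_antidiagonal_choose_succ_mul (fun i j => Sgen a i (m + 1) * phiCoeff a j)]
      have hA : ∑ ij ∈ antidiagonal n, (n.choose ij.1 : ℝ) *
            (Sgen a ij.1 (m + 1) * phiCoeff a (ij.2 + 1)) =
          ∑ ij ∈ antidiagonal n, (n.choose ij.1 : ℝ) *
            ((ij.2 - a) * (Sgen a ij.1 (m + 1) * phiCoeff a ij.2)) + Sgen a n (m + 1) := by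
        have hcorner : ∑ ij ∈ antidiagonal n, (n.choose ij.1 : ℝ) *
            (Sgen a ij.1 (m + 1) * if ij.2 = 0 then 1 else 0) = Sgen a n (m + 1) := by
          rw [sum_eq_single_of_mem (n, 0) (by simp)]
          · simp
          · rintro ⟨i, j⟩ hij hne
            have hj : j ≠ 0 := by rintro rfl; simp_all
            simp [hj]
        simp only [phiCoeff_succ, mul_add, sum_add_distrib, hcorner]
        congr 1
        exact sum_congr rfl fun ij _ => by ring
      have hB : ∑ ij ∈ antidiagonal n, (n.choose ij.2 : ℝ) *
            (Sgen a (ij.1 + 1) (m + 1) * phiCoeff a ij.2) =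
          ∑ ij ∈ antidiagonal n, (n.choose ij.1 : ℝ) *
            ((ij.1 - a * (m + 1)) * (Sgen a ij.1 (m + 1) * phiCoeff a ij.2)) +
          ∑ ij ∈ antidiagonal n, (n.choose ij.1 : ℝ) * (Sgen a ij.1 m * phiCoeff a ij.2) := by
        rw [← sum_add_distrib]
        refine sum_congr rfl fun ij hij => ?_
        rw [Nat.choose_symm_of_eq_add (mem_antidiagonal.mp hij).symm, Sgen_succ_succ]
        ring
      have hC : ∑ ij ∈ antidiagonal n, (n.choose ij.1 : ℝ) *
            ((ij.2 - a) * (Sgen a ij.1 (m + 1) * phiCoeff a ij.2)) +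
          ∑ ij ∈ antidiagonal n, (n.choose ij.1 : ℝ) *
            ((ij.1 - a * (m + 1)) * (Sgen a ij.1 (m + 1) * phiCoeff a ij.2)) =
          ((n : ℝ) - a * (m + 2)) * ∑ ij ∈ antidiagonal n,
            (n.choose ij.1 : ℝ) * (Sgen a ij.1 (m + 1) * phiCoeff a ij.2) := by
        rw [← sum_add_distrib, mul_sum]
        refine sum_congr rfl fun ij hij => ?_
        have hn : (n : ℝ) = ij.1 + ij.2 := by exact_mod_cast (mem_antidiagonal.mp hij).symm
        rw [hn]; ring
      have ih' := ih (m + 1)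
      rw [hA, hB, ← ih m, Sgen_succ_succ]
      push_cast at ih' ⊢
      linear_combination ((n : ℝ) - a * (m + 2)) * ih' - hC

end Sgen

lemma Sgen_nonneg {a : ℝ} (ha : a < 1) (n l : ℕ) : 0 ≤ Sgen a n l := by
  induction l generalizing n with
  | zero => rw [Sgen_zero_right]; positivity
  | succ l ih =>
    refine (mul_nonneg_iff_of_pos_left (by positivity : (0 : ℝ) < l + 1)).mp ?_
    rw [add_one_mul_Sgen_succ]
    exact sum_nonneg fun ij _ =>
      mul_nonneg (by positivity) (mul_nonneg (ih _) (phiCoeff_nonneg ha _))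

lemma hasSum_egf_mul {𝕜 : Type*} [RCLike 𝕜] {f g : ℕ → 𝕜} {x A B : 𝕜}
    (hf : HasSum (fun n => f n * x ^ n / n.factorial) A)
    (hg : HasSum (fun n => g n * x ^ n / n.factorial) B) :
    HasSum (fun n => (∑ ij ∈ antidiagonal n, (n.choose ij.1 : 𝕜) * (f ij.1 * g ij.2)) *
      x ^ n / n.factorial) (A * B) := by
  have hf' := summable_norm_iff.mpr hf.summable
  have hg' := summable_norm_iff.mpr hg.summable
  have h := (summable_norm_sum_mul_antidiagonal_of_summable_norm hf' hg').of_norm.hasSum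
  rw [← tsum_mul_tsum_eq_tsum_sum_antidiagonal_of_summable_norm hf' hg', hf.tsum_eq,
    hg.tsum_eq] at h
  refine h.congr_fun fun n => ?_
  rw [sum_mul, sum_div]
  refine sum_congr rfl fun ij hij => ?_
  obtain ⟨i, j⟩ := ij
  obtain rfl : i + j = n := mem_antidiagonal.mp hij
  have hfact : ((i + j).choose i : 𝕜) * i.factorial * j.factorial = (i + j).factorial := by
    rw [Nat.choose_symm_add]; exact_mod_cast Nat.add_choose_mul_factorial_mul_factorial i j
  have hchoose : ((i + j).choose i : 𝕜) ≠ 0 := by exact_mod_cast (Nat.choose_pos (by omega)).ne'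
  rw [← hfact, pow_add]
  field_simp

lemma hasSum_Sgen {a x : ℝ} (ha : a ≠ 0) (hx : |x| < 1) (l : ℕ) :
    HasSum (fun n => Sgen a n l * x ^ n / n.factorial) (phi a x ^ l / l.factorial) := by
  induction l with
  | zero =>
    simp only [pow_zero, Nat.factorial_zero, Nat.cast_one, div_one]
    refine (hasSum_ite_eq 0 (1 : ℝ)).congr_fun fun n => ?_
    cases n <;> simp [Sgen_zero_right]
  | succ l ih =>
    have h := (hasSum_egf_mul ih (hasSum_phiCoeff ha hx)).div_const (l + 1)
    simp only [← add_one_mul_Sgen_succ] at h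
    have hval : phi a x ^ (l + 1) / (l + 1).factorial =
        phi a x ^ l / l.factorial * phi a x / (l + 1) := by
      rw [Nat.factorial_succ]; push_cast; field_simp; ring
    rw [hval]
    exact h.congr_fun fun n => by field_simp

lemma hasSum_exp_mul_phi {a c x : ℝ} (ha : a < 1) (ha0 : a ≠ 0) (hc : 0 ≤ c) (hx0 : 0 ≤ x)
    (hx1 : x < 1) :
    HasSum (fun n => (∑ l ∈ range (n + 1), c ^ l * Sgen a n l) * x ^ n / n.factorial)
      (exp (c * phi a x)) := by
  set u : ℕ × ℕ → ℝ := fun ln => c ^ ln.1 * (Sgen a ln.2 ln.1 * x ^ ln.2 / ln.2.factorial)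
  have hrow (l : ℕ) : HasSum (fun n => u (l, n)) (c ^ l * (phi a x ^ l / l.factorial)) :=
    (hasSum_Sgen ha0 (abs_lt.mpr ⟨by linarith, hx1⟩) l).mul_left _
  have hexp : HasSum (fun l => c ^ l * (phi a x ^ l / l.factorial)) (exp (c * phi a x)) := by
    rw [Real.exp_eq_exp_ℝ]
    exact (NormedSpace.expSeries_div_hasSum_exp (c * phi a x)).congr_fun fun l => by ring
  have hu_nonneg : 0 ≤ u := fun ln => by
    have := Sgen_nonneg ha ln.2 ln.1
    positivity
  have hu : HasSum u (exp (c * phi a x)) := by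
    have hsum : Summable u := (summable_prod_of_nonneg hu_nonneg).mpr
      ⟨fun l => (hrow l).summable, hexp.summable.congr fun l => (hrow l).tsum_eq.symm⟩
    rw [hexp.unique (hsum.hasSum.prod_fiberwise hrow)]
    exact hsum.hasSum
  have hcol (n : ℕ) : HasSum (fun l => u (l, n)) (∑ l ∈ range (n + 1), u (l, n)) :=
    hasSum_sum_of_ne_finset_zero fun l hl => by
      simp [u, Sgen_eq_zero_of_lt a (not_lt.mp (mt mem_range.mpr hl))]
  have hcols := ((Equiv.prodComm ℕ ℕ).hasSum_iff.mpr hu).prod_fiberwise hcol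
  exact hcols.congr_fun fun n => by simp only [u, sum_mul, sum_div, mul_assoc, mul_div_assoc]

end GNB

/-- **Probability generating function of `gNB(γ₀, a, p)`** (Appendix F): for `t ∈ [0,1]`,
`∑_{n≥0} p_N(n) t^n = exp{−γ₀((1 − pt)^a − (1 − p)^a)/(a p^a)}`. -/
theorem gNB_pgf (a γ₀ p : ℝ) (ha : a < 1) (ha0 : a ≠ 0)
    (hγ : 0 < γ₀) (hp : p ∈ Set.Ioo (0 : ℝ) 1)
    (pN : ℕ → ℝ)
    (hpN : ∀ n : ℕ, pN n =
      p ^ n / (Nat.factorial n : ℝ) *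
        Real.exp (-(γ₀ * (1 - (1 - p) ^ a) / (a * p ^ a))) *
        ∑ l ∈ Finset.range (n + 1), γ₀ ^ l * p ^ (-(a * l)) * Sgen a n l) :
    ∀ t : ℝ, t ∈ Set.Icc (0 : ℝ) 1 →
      ∑' n : ℕ, pN n * t ^ n =
        Real.exp (-(γ₀ * ((1 - p * t) ^ a - (1 - p) ^ a) / (a * p ^ a))) := by
  rintro t ⟨ht0, ht1⟩
  obtain ⟨hp0, hp1⟩ := hp
  set E := exp (-(γ₀ * (1 - (1 - p) ^ a) / (a * p ^ a)))
  set c := γ₀ * p ^ (-a)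
  have hpt : p * t < 1 := (mul_le_of_le_one_right hp0.le ht1).trans_lt hp1
  have hsum :=
    (GNB.hasSum_exp_mul_phi ha ha0 (by positivity : 0 ≤ c) (by positivity) hpt).mul_left E
  have hterm (n : ℕ) : pN n * t ^ n =
      E * ((∑ l ∈ range (n + 1), c ^ l * Sgen a n l) * (p * t) ^ n / n.factorial) := by
    have hpow (l : ℕ) : γ₀ ^ l * p ^ (-(a * l)) = c ^ l := by
      rw [mul_pow, ← Real.rpow_natCast (p ^ (-a)), ← Real.rpow_mul hp0.le]; ring_nf
    simp only [hpN, ← hpow, mul_pow]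
    ring
  rw [tsum_congr hterm, hsum.tsum_eq, ← Real.exp_add]
  have hpa : p ^ a ≠ 0 := (Real.rpow_pos_of_pos hp0 a).ne'
  congr 1
  simp only [c, GNB.phi, Real.rpow_neg hp0.le]
  field_simp
  ring
end

section
/- Let a < 1, x > 0, and n ≥ 1 be an integer, and define S_a(m,l) by the recursion in the context. Define R(i,j) for integers 1 ≤ i ≤ n and j ≥ 0 by R(n,j) = 1 for all j, and R(i,j) = (i − a·j)·R(i+1, j) + x·R(i+1, j+1) for 1 ≤ i ≤ n−1. Then for every integer 1 ≤ i ≤ n, ∑_{j=0}^{i} x^j · S_a(i,j) · R(i,j) = ∑_{ℓ=0}^{n} x^ℓ · S_a(n,ℓ). In particular, taking i = 1, x·R(1,1) = ∑_{ℓ=0}^{n} x^ℓ S_a(n,ℓ). -/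
open Real Finset

lemma Sgen_zero_of_lt (a : ℝ) : ∀ n l : ℕ, n < l → Sgen a n l = 0 := by
  intro n
  induction n with
  | zero =>
    intro l hl
    match l, hl with
    | l + 1, _ => simp [Sgen]
  | succ m ih =>
    intro l hl
    match l, hl with
    | l + 1, hl =>
      have h1 : m < l + 1 := by omega
      have h2 : m < l := by omega
      simp [Sgen, ih _ h1, ih _ h2]

lemma Sgen_step (a x : ℝ) (n : ℕ) (R : ℕ → ℕ → ℝ) (i : ℕ) (hi : 1 ≤ i) (hin : i < n)
    (hR : ∀ i j : ℕ, 1 ≤ i → i < n →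
      R i j = ((i : ℝ) - a * j) * R (i + 1) j + x * R (i + 1) (j + 1)) :
    ∑ j ∈ Finset.range (i + 1), x ^ j * Sgen a i j * R i j =
      ∑ j ∈ Finset.range (i + 2), x ^ j * Sgen a (i + 1) j * R (i + 1) j := by
  have hL : ∑ j ∈ Finset.range (i + 1), x ^ j * Sgen a i j * R i j =
      (∑ j ∈ Finset.range (i + 1), x ^ j * ((i : ℝ) - a * j) * Sgen a i j * R (i + 1) j)
      + ∑ j ∈ Finset.range (i + 1), x ^ (j + 1) * Sgen a i j * R (i + 1) (j + 1) := by
    rw [← Finset.sum_add_distrib]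
    apply Finset.sum_congr rfl
    intro j _
    rw [hR i j hi hin]
    ring
  -- first sum: extend to range (i+2), drop j = 0, reindex
  have hA : (∑ j ∈ Finset.range (i + 1), x ^ j * ((i : ℝ) - a * j) * Sgen a i j * R (i + 1) j)
      = ∑ j ∈ Finset.range (i + 1),
          x ^ (j + 1) * ((i : ℝ) - a * (j + 1)) * Sgen a i (j + 1) * R (i + 1) (j + 1) := by
    rw [Finset.sum_range_succ']
    have h0 : Sgen a i 0 = 0 := by
      match i, hi with
      | i + 1, _ => simp [Sgen]
    rw [Finset.sum_range_succ]
    rw [Sgen_zero_of_lt a i (i + 1) (by omega)]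
    simp [h0]
  rw [hL, hA, ← Finset.sum_add_distrib]
  rw [Finset.sum_range_succ' (fun j => x ^ j * Sgen a (i + 1) j * R (i + 1) j) (i + 1)]
  have h0' : Sgen a (i + 1) 0 = 0 := by simp [Sgen]
  rw [h0']
  simp only [mul_zero, zero_mul, add_zero]
  apply Finset.sum_congr rfl
  intro j _
  show _ = x ^ (j + 1) * Sgen a (i + 1) (j + 1) * R (i + 1) (j + 1)
  have : Sgen a (i + 1) (j + 1) = ((i : ℝ) - a * (j + 1)) * Sgen a i (j + 1) + Sgen a i j := by
    simp [Sgen]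
  rw [this]
  ring

/-- **Normalization of (F.5)**: with `R(n,j) = 1` and
`R(i,j) = (i − aj) R(i+1,j) + x R(i+1,j+1)` for `1 ≤ i ≤ n−1` (equation (3.11)),
one has `∑_{j=0}^i x^j S_a(i,j) R(i,j) = ∑_{ℓ=0}^n x^ℓ S_a(n,ℓ)` for all `1 ≤ i ≤ n`;
in particular `x·R(1,1) = ∑_{ℓ=0}^n x^ℓ S_a(n,ℓ)`. -/
theorem Sgen_R_normalization (a x : ℝ) (ha : a < 1) (hx : 0 < x)
    (n : ℕ) (hn : 1 ≤ n) (R : ℕ → ℕ → ℝ)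
    (hRn : ∀ j : ℕ, R n j = 1)
    (hR : ∀ i j : ℕ, 1 ≤ i → i < n →
      R i j = ((i : ℝ) - a * j) * R (i + 1) j + x * R (i + 1) (j + 1)) :
    (∀ i : ℕ, 1 ≤ i → i ≤ n →
      ∑ j ∈ Finset.range (i + 1), x ^ j * Sgen a i j * R i j =
        ∑ l ∈ Finset.range (n + 1), x ^ l * Sgen a n l) ∧
    x * R 1 1 = ∑ l ∈ Finset.range (n + 1), x ^ l * Sgen a n l := by
  have main : ∀ d i : ℕ, i + d = n → 1 ≤ i →
      ∑ j ∈ Finset.range (i + 1), x ^ j * Sgen a i j * R i j =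
        ∑ l ∈ Finset.range (n + 1), x ^ l * Sgen a n l := by
    intro d
    induction d with
    | zero =>
      intro i hi h1
      simp only [Nat.add_zero] at hi
      subst hi
      apply Finset.sum_congr rfl
      intro j _
      rw [hRn j, mul_one]
    | succ d ih =>
      intro i hi h1
      have hin : i < n := by omega
      rw [Sgen_step a x n R i h1 hin hR]
      exact ih (i + 1) (by omega) (by omega)
  have h1 := main (n - 1) 1 (by omega) le_rfl
  refine ⟨fun i hi hin => main (n - i) i (by omega) hi, ?_⟩
  rw [← h1]
  have : Sgen a 1 1 = 1 := by
    show Sgen a (0 + 1) (0 + 1) = 1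
    simp [Sgen]
  simp [Finset.sum_range_succ, Sgen, this]
end

section
/- Let a < 1, γ_0 > 0, and p ∈ (0,1), and define S_a(n,l) by the recursion in the context. For j ≥ 1 set w_j = γ_0 · Γ(j − a) · p^{j − a} / (Γ(1 − a) · j!). Then for every integer n ≥ 0, ∑ over all vectors (m_1, …, m_n) of nonnegative integers with ∑_{j=1}^n j·m_j = n of ∏_{j=1}^{n} w_j^{m_j} / m_j! equals (p^n / n!) · ∑_{l=0}^{n} γ_0^l · p^{−a l} · S_a(n,l). -/
/-!
Grouping the FoF vectors by `l = ∑ m_j`, the multinomial theorem turns the left side into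
`∑_l [X^n] (∑_{j ≤ n} w_j X^j)^l / l!`, the degree-`n` part of `exp (∑_j w_j X^j)`.
Up to degree `n`, `∑_j w_j X^j` is `γ₀ p^{-a} g (p X)`, where `g = (1 - (1 - X)^a) / a`
(`-log (1 - X)` if `a = 0`) has coefficients `Γ(j - a) / (Γ(1 - a) j!)`. It solves
`(1 - X) g' = 1 - a g`, and differentiating `g^l` with this equation shows that
`n! [X^n] g^l / l!` obeys the recursion defining `S_a(n, l)`.
-/

open Real Finset

open PowerSeries
open scoped Nat

section StirlingCoefficients

variable {a : ℝ} {g : ℝ⟦X⟧}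

lemma coeff_one_sub_X_mul_derivative {R : Type*} [CommRing R] (ψ : R⟦X⟧) (n : ℕ) :
    coeff n ((1 - X) * d⁄dX R ψ) = (n + 1) * coeff (n + 1) ψ - n * coeff n ψ := by
  rw [sub_mul, one_mul, map_sub, coeff_derivative]
  cases n with
  | zero => simp
  | succ n =>
    rw [coeff_succ_X_mul, coeff_derivative]
    push_cast
    ring

lemma coeff_pow_recursion_of_ode (hode : (1 - X) * d⁄dX ℝ g = 1 - C a * g) (n l : ℕ) :
    (n + 1) * coeff (n + 1) (g ^ (l + 1)) =
      (n - a * (l + 1)) * coeff n (g ^ (l + 1)) + (l + 1) * coeff n (g ^ l) := by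
  have hpow : (1 - X) * d⁄dX ℝ (g ^ (l + 1)) =
      C ((l : ℝ) + 1) * g ^ l - C (a * (l + 1)) * g ^ (l + 1) := by
    rw [Derivation.leibniz_pow, Nat.add_sub_cancel, nsmul_eq_mul, smul_eq_mul]
    simp only [map_mul, map_add, map_one, map_natCast, Nat.cast_succ]
    linear_combination ((l : ℝ⟦X⟧) + 1) * g ^ l * hode
  have h := congrArg (coeff n) hpow
  rw [coeff_one_sub_X_mul_derivative, map_sub, coeff_C_mul, coeff_C_mul] at h
  linear_combination h

theorem factorial_mul_coeff_pow_eq_Sgen (hg : constantCoeff g = 0)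
    (hode : (1 - X) * d⁄dX ℝ g = 1 - C a * g) (n l : ℕ) :
    (n ! : ℝ) * coeff n (g ^ l) = l ! * Sgen a n l := by
  induction n generalizing l with
  | zero => cases l <;> simp [Sgen, hg]
  | succ n ih =>
    cases l with
    | zero => simp [Sgen, coeff_one]
    | succ l =>
      have hrec := coeff_pow_recursion_of_ode hode n l
      have ih₁ := ih (l + 1)
      have ih₂ := ih l
      simp only [Sgen, Nat.factorial_succ, Nat.cast_mul, Nat.cast_succ] at ih₁ ⊢
      linear_combination (n ! : ℝ) * hrec + (n - a * (l + 1)) * ih₁ + (l + 1) * ih₂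

end StirlingCoefficients

noncomputable def genLogSeries (a : ℝ) : ℝ⟦X⟧ :=
  mk fun j => if j = 0 then 0 else Gamma (j - a) / (Gamma (1 - a) * j !)

section genLogSeries

variable {a : ℝ}

lemma constantCoeff_genLogSeries : constantCoeff (genLogSeries a) = 0 := by
  simp [genLogSeries]

lemma coeff_succ_genLogSeries (j : ℕ) :
    coeff (j + 1) (genLogSeries a) = Gamma (j + 1 - a) / (Gamma (1 - a) * (j + 1)!) := by
  simp [genLogSeries]

lemma genLogSeries_ode (ha : a < 1) :
    (1 - X) * d⁄dX ℝ (genLogSeries a) = 1 - C a * genLogSeries a := by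
  ext n
  rw [coeff_one_sub_X_mul_derivative, map_sub, coeff_C_mul, coeff_one]
  have hΓ : Gamma (1 - a) ≠ 0 := (Gamma_pos_of_pos (by linarith)).ne'
  rcases n with _ | j
  · simp [coeff_succ_genLogSeries, constantCoeff_genLogSeries, hΓ]
  · have hj : (j : ℝ) + 1 - a ≠ 0 := by linarith [j.cast_nonneg (α := ℝ)]
    rw [coeff_succ_genLogSeries, coeff_succ_genLogSeries, if_neg j.succ_ne_zero,
      show (↑(j + 1) : ℝ) + 1 - a = (j + 1 - a) + 1 by push_cast; ring, Gamma_add_one hj,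
      Nat.factorial_succ (j + 1)]
    push_cast
    field_simp
    ring

end genLogSeries

section Multinomial

lemma prod_C_mul_X_pow_pow {R ι : Type*} [CommSemiring R] [Fintype ι] (y : ι → R) (e f : ι → ℕ) :
    ∏ k, (C (y k) * X ^ e k) ^ f k = C (∏ k, y k ^ f k) * X ^ ∑ k, e k * f k := by
  simp only [mul_pow, prod_mul_distrib, map_prod, map_pow, ← pow_mul, prod_pow_eq_pow_sum]

variable {K ι : Type*} [Field K] [CharZero K] [Fintype ι] [DecidableEq ι]

lemma coeff_sum_C_mul_X_pow_pow_div_factorial (y : ι → K) (e : ι → ℕ) (n l : ℕ) :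
    coeff n ((∑ k, C (y k) * X ^ e k) ^ l) / l ! =
      ∑ f ∈ (piAntidiag univ l).filter (fun f => ∑ k, e k * f k = n),
        ∏ k, y k ^ f k / (f k)! := by
  rw [sum_pow_eq_sum_piAntidiag, map_sum, sum_div, sum_filter]
  refine sum_congr rfl fun f hf => ?_
  have hspec := Nat.multinomial_spec univ f
  rw [(mem_piAntidiag.mp hf).1] at hspec
  rw [← nsmul_eq_mul, map_nsmul, prod_C_mul_X_pow_pow, coeff_C_mul_X_pow, nsmul_eq_mul]
  split_ifs with h h' h'
  · rw [prod_div_distrib, ← hspec]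
    push_cast
    rw [mul_comm _ (Nat.multinomial univ f : K), mul_div_mul_left]
    exact_mod_cast (Nat.multinomial_pos univ f).ne'
  · exact absurd h.symm h'
  · exact absurd h'.symm h
  · simp

theorem sum_prod_pow_div_factorial_eq_sum_coeff_pow (y : ι → K) {e : ι → ℕ}
    (he : ∀ k, 0 < e k) (n : ℕ) :
    ∑ f ∈ (Fintype.piFinset fun _ : ι => range (n + 1)).filter
        (fun f => ∑ k, e k * f k = n), ∏ k, y k ^ f k / (f k)! =
      ∑ l ∈ range (n + 1), coeff n ((∑ k, C (y k) * X ^ e k : K⟦X⟧) ^ l) / l ! := by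
  have hsum_le {f : ι → ℕ} (hf : ∑ k, e k * f k = n) : ∑ k, f k ≤ n :=
    hf ▸ sum_le_sum fun k _ => Nat.le_mul_of_pos_left (f k) (he k)
  simp_rw [coeff_sum_C_mul_X_pow_pow_div_factorial]
  refine (sum_fiberwise_of_maps_to (g := fun f : ι → ℕ => ∑ k, f k) (t := range (n + 1))
    (fun f hf => mem_range_succ_iff.mpr (hsum_le (mem_filter.mp hf).2)) _).symm.trans
    (sum_congr rfl fun l _ => sum_congr (ext fun f => ?_) fun _ _ => rfl)
  simp only [mem_filter, Fintype.mem_piFinset, mem_range, mem_piAntidiag, mem_univ,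
    implies_true, and_true]
  constructor
  · rintro ⟨⟨-, hf⟩, rfl⟩
    exact ⟨rfl, hf⟩
  · rintro ⟨rfl, hf⟩
    refine ⟨⟨fun k => Nat.lt_succ_of_le ?_, hf⟩, rfl⟩
    exact (single_le_sum (f := f) (fun _ _ => Nat.zero_le _) (mem_univ k)).trans (hsum_le hf)

end Multinomial

section Truncation

variable {R : Type*} [CommSemiring R]

lemma coe_trunc_succ_eq_sum_fin {ψ : R⟦X⟧} (hψ : constantCoeff ψ = 0) (n : ℕ) :
    (trunc (n + 1) ψ : R⟦X⟧) = ∑ k : Fin n, C (coeff (k.1 + 1) ψ) * X ^ (k.1 + 1) := by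
  rw [trunc_apply, ← range_eq_Ico, ← Polynomial.coeToPowerSeries.ringHom_apply, map_sum]
  simp only [Polynomial.coeToPowerSeries.ringHom_apply, Polynomial.coe_monomial,
    monomial_eq_C_mul_X_pow]
  rw [sum_range_succ', Fin.sum_univ_eq_sum_range (fun k => C (coeff (k + 1) ψ) * X ^ (k + 1)),
    coeff_zero_eq_constantCoeff, hψ, map_zero, zero_mul, add_zero]

lemma coeff_coe_trunc_pow (ψ : R⟦X⟧) {m n : ℕ} (h : m < n) (l : ℕ) :
    coeff m ((trunc n ψ : R⟦X⟧) ^ l) = coeff m (ψ ^ l) := by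
  have := congrArg (Polynomial.coeff · m) (trunc_trunc_pow ψ n l)
  simpa only [coeff_trunc, if_pos h] using this

end Truncation

theorem gNBP_FoF_normalization_general (a γ₀ p : ℝ) (ha : a < 1)
    (hp : p ∈ Set.Ioo (0 : ℝ) 1)
    (w : ℕ → ℝ)
    (hw : ∀ j : ℕ, 1 ≤ j →
      w j = γ₀ * Real.Gamma ((j : ℝ) - a) * p ^ ((j : ℝ) - a) /
        (Real.Gamma (1 - a) * (Nat.factorial j : ℝ)))
    (n : ℕ) :
    ∑ f ∈ (Fintype.piFinset fun _ : Fin n => Finset.range (n + 1)).filter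
        (fun f => ∑ k : Fin n, (k.1 + 1) * f k = n),
      ∏ k : Fin n, w (k.1 + 1) ^ (f k) / (Nat.factorial (f k) : ℝ) =
    p ^ n / (Nat.factorial n : ℝ) *
      ∑ l ∈ Finset.range (n + 1), γ₀ ^ l * p ^ (-(a * l)) * Sgen a n l := by
  have hp₀ : 0 < p := hp.1
  set V := C (γ₀ * p ^ (-a)) * rescale p (genLogSeries a)
  have hV₀ : constantCoeff V = 0 := by
    rw [← coeff_zero_eq_constantCoeff_apply, coeff_C_mul, coeff_rescale,
      coeff_zero_eq_constantCoeff_apply, constantCoeff_genLogSeries, mul_zero, mul_zero]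
  have hwV (k : Fin n) : w (k.1 + 1) = coeff (k.1 + 1) V := by
    rw [hw (k.1 + 1) (Nat.le_add_left 1 _), coeff_C_mul, coeff_rescale, coeff_succ_genLogSeries]
    rw [rpow_sub hp₀, rpow_natCast, rpow_neg hp₀.le]
    push_cast
    ring
  rw [sum_prod_pow_div_factorial_eq_sum_coeff_pow _ (fun k => k.1.succ_pos) n]
  simp_rw [hwV]
  rw [← coe_trunc_succ_eq_sum_fin hV₀, mul_sum]
  refine sum_congr rfl fun l _ => ?_
  have hS := factorial_mul_coeff_pow_eq_Sgen constantCoeff_genLogSeries (genLogSeries_ode ha) n l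
  rw [coeff_coe_trunc_pow V (lt_add_one n), mul_pow, ← map_pow, ← map_pow, coeff_C_mul,
    coeff_rescale, mul_pow, ← rpow_natCast (p ^ (-a)), ← rpow_mul hp₀.le]
  field_simp
  linear_combination γ₀ ^ l * hS

/-- **Corollary 3 for the generalized negative binomial process**: with Poisson rates
`w_j = γ₀ Γ(j−a) p^{j−a}/(Γ(1−a) j!)` (equation (3.8)), the sum over all FoF vectors
`(m_1,…,m_n)` with `∑ j·m_j = n` of `∏_j w_j^{m_j}/m_j!` equals
`(p^n/n!) ∑_{l=0}^n γ₀^l p^{−al} S_a(n,l)`. -/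
theorem gNBP_FoF_normalization (a γ₀ p : ℝ) (ha : a < 1)
    (hγ : 0 < γ₀) (hp : p ∈ Set.Ioo (0 : ℝ) 1)
    (w : ℕ → ℝ)
    (hw : ∀ j : ℕ, 1 ≤ j →
      w j = γ₀ * Real.Gamma ((j : ℝ) - a) * p ^ ((j : ℝ) - a) /
        (Real.Gamma (1 - a) * (Nat.factorial j : ℝ)))
    (n : ℕ) :
    ∑ f ∈ (Fintype.piFinset fun _ : Fin n => Finset.range (n + 1)).filter
        (fun f => ∑ k : Fin n, (k.1 + 1) * f k = n),
      ∏ k : Fin n, w (k.1 + 1) ^ (f k) / (Nat.factorial (f k) : ℝ) =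
    p ^ n / (Nat.factorial n : ℝ) *
      ∑ l ∈ Finset.range (n + 1), γ₀ ^ l * p ^ (-(a * l)) * Sgen a n l :=
  gNBP_FoF_normalization_general a γ₀ p ha hp w hw n
end

section
/- Let n ≥ 0, i ≥ 1, and r ≥ 1 be integers with n ≥ i·r, and let w_1, w_2, …, w_n be nonnegative real numbers. Then ∑ over all vectors (m_1, …, m_n) of nonnegative integers with ∑_{j=1}^n j·m_j = n of ( ∏_{j=1}^{n} w_j^{m_j}/m_j! ) · ∏_{k=0}^{r−1} (m_i − k) equals w_i^r · ∑ over all vectors (m′_1, …, m′_n) of nonnegative integers with ∑_{j=1}^n j·m′_j = n − i·r of ∏_{j=1}^{n} w_j^{m′_j}/m′_j!. -/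
open Real Finset

lemma FoF_aux (n i r : ℕ)
    (hr : 1 ≤ r) (hn : i * r ≤ n)
    (w : ℕ → ℝ)
    (idx : Fin n) (hidx : idx.1 + 1 = i) :
    ∑ f ∈ (Fintype.piFinset fun _ : Fin n => Finset.range (n + 1)).filter
        (fun f => ∑ k : Fin n, (k.1 + 1) * f k = n),
      (∏ k : Fin n, w (k.1 + 1) ^ (f k) / (Nat.factorial (f k) : ℝ)) *
        ∏ k ∈ Finset.range r, ((f idx : ℝ) - (k : ℝ)) =
    w i ^ r *
      ∑ f ∈ (Fintype.piFinset fun _ : Fin n => Finset.range (n + 1)).filter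
          (fun f => ∑ k : Fin n, (k.1 + 1) * f k = n - i * r),
        ∏ k : Fin n, w (k.1 + 1) ^ (f k) / (Nat.factorial (f k) : ℝ) := by
  classical
  have hi : 1 ≤ i := by omega
  -- split any sum at idx
  have hsum : ∀ (f : Fin n → ℕ), ∑ k : Fin n, (k.1 + 1) * f k =
      (∑ k ∈ Finset.univ.erase idx, (k.1 + 1) * f k) + i * f idx := by
    intro f
    rw [← Finset.sum_erase_add _ _ (Finset.mem_univ idx), hidx]
  have hupd : ∀ (f : Fin n → ℕ) (v : ℕ),
      ∑ k ∈ Finset.univ.erase idx, (k.1 + 1) * (Function.update f idx v) k =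
      ∑ k ∈ Finset.univ.erase idx, (k.1 + 1) * f k := by
    intro f v
    refine Finset.sum_congr rfl fun k hk => ?_
    rw [Function.update_of_ne (Finset.ne_of_mem_erase hk)]
  rw [Finset.mul_sum]
  rw [← Finset.sum_filter_add_sum_filter_not
      ((Fintype.piFinset fun _ : Fin n => Finset.range (n + 1)).filter
        (fun f => ∑ k : Fin n, (k.1 + 1) * f k = n)) (fun f => r ≤ f idx)]
  have hzero : ∑ f ∈ (((Fintype.piFinset fun _ : Fin n => Finset.range (n + 1)).filter
        (fun f => ∑ k : Fin n, (k.1 + 1) * f k = n)).filter (fun f => ¬ r ≤ f idx)),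
      (∏ k : Fin n, w (k.1 + 1) ^ (f k) / (Nat.factorial (f k) : ℝ)) *
        ∏ k ∈ Finset.range r, ((f idx : ℝ) - (k : ℝ)) = 0 := by
    refine Finset.sum_eq_zero fun f hf => ?_
    have hf' : f idx < r := by
      have := (Finset.mem_filter.1 hf).2
      omega
    have : ∏ k ∈ Finset.range r, ((f idx : ℝ) - (k : ℝ)) = 0 :=
      Finset.prod_eq_zero (Finset.mem_range.2 hf') (by simp)
    rw [this, mul_zero]
  rw [hzero, add_zero]
  refine Finset.sum_nbij' (fun f => Function.update f idx (f idx - r))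
    (fun g => Function.update g idx (g idx + r)) ?_ ?_ ?_ ?_ ?_
  · -- forward membership
    intro f hf
    simp only [Finset.mem_filter, Fintype.mem_piFinset, Finset.mem_range] at hf ⊢
    obtain ⟨⟨hmem, hsumf⟩, hrf⟩ := hf
    refine ⟨fun k => ?_, ?_⟩
    · rcases eq_or_ne k idx with rfl | hk
      · rw [Function.update_self]; have := hmem k; omega
      · rw [Function.update_of_ne hk]; exact hmem k
    · rw [hsum, hupd, Function.update_self]
      rw [hsum f] at hsumf
      have h1 : i * (f idx - r) + i * r = i * f idx := by
        rw [← Nat.mul_add]; congr 1; omega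
      generalize hA : ∑ k ∈ Finset.univ.erase idx, (k.1 + 1) * f k = A at *
      generalize i * (f idx - r) = B at *
      generalize i * r = C at *
      generalize i * f idx = D at *
      omega
  · -- backward membership
    intro g hg
    simp only [Finset.mem_filter, Fintype.mem_piFinset, Finset.mem_range] at hg ⊢
    obtain ⟨hmem, hsumg⟩ := hg
    rw [hsum g] at hsumg
    have hle : g idx ≤ i * g idx := Nat.le_mul_of_pos_left _ hi
    have hri : r ≤ i * r := Nat.le_mul_of_pos_left _ hi
    have hgn : g idx + r ≤ n := by
      generalize hA : ∑ k ∈ Finset.univ.erase idx, (k.1 + 1) * g k = A at *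
      generalize i * g idx = D at *
      generalize i * r = C at *
      omega
    have h1 : i * (g idx + r) = i * g idx + i * r := Nat.mul_add i _ _
    refine ⟨⟨fun k => ?_, ?_⟩, ?_⟩
    · rcases eq_or_ne k idx with rfl | hk
      · rw [Function.update_self]; omega
      · rw [Function.update_of_ne hk]; have := hmem k; exact this
    · rw [hsum, hupd, Function.update_self]
      generalize hA : ∑ k ∈ Finset.univ.erase idx, (k.1 + 1) * g k = A at *
      generalize i * (g idx + r) = B at *
      generalize i * g idx = D at *
      generalize i * r = C at *
      omega
    · rw [Function.update_self]; omega
  · -- left inverse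
    intro f hf
    simp only [Finset.mem_filter] at hf
    have hrf : r ≤ f idx := hf.2
    funext k
    simp only [Function.update_apply]
    split_ifs <;> subst_vars <;> omega
  · -- right inverse
    intro g _
    funext k
    simp only [Function.update_apply]
    split_ifs <;> subst_vars <;> omega
  · -- term equality
    intro f hf
    simp only [Finset.mem_filter] at hf
    have hrf : r ≤ f idx := hf.2
    set g := Function.update f idx (f idx - r) with hg
    have hprodsplit : ∀ (h : Fin n → ℕ),
        ∏ k : Fin n, w (k.1 + 1) ^ (h k) / (Nat.factorial (h k) : ℝ) =
        (∏ k ∈ Finset.univ.erase idx, w (k.1 + 1) ^ (h k) / (Nat.factorial (h k) : ℝ)) *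
          (w i ^ (h idx) / (Nat.factorial (h idx) : ℝ)) := by
      intro h
      rw [← Finset.prod_erase_mul _ _ (Finset.mem_univ idx), hidx]
    have herase : ∏ k ∈ Finset.univ.erase idx, w (k.1 + 1) ^ (g k) / (Nat.factorial (g k) : ℝ) =
        ∏ k ∈ Finset.univ.erase idx, w (k.1 + 1) ^ (f k) / (Nat.factorial (f k) : ℝ) := by
      refine Finset.prod_congr rfl fun k hk => ?_
      rw [hg, Function.update_of_ne (Finset.ne_of_mem_erase hk)]
    have hgidx : g idx = f idx - r := by rw [hg, Function.update_self]
    rw [hprodsplit f, hprodsplit g, herase, hgidx]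
    set m := f idx with hm
    -- now pure algebra
    have hP : ∏ k ∈ Finset.range r, ((m : ℝ) - (k : ℝ)) = (m.descFactorial r : ℝ) := by
      rw [Nat.descFactorial_eq_prod_range, Nat.cast_prod]
      refine (Finset.prod_congr rfl fun k hk => ?_).symm
      have hk' : k < r := Finset.mem_range.1 hk
      rw [Nat.cast_sub (by omega)]
    have hfac : ((m - r).factorial : ℝ) * (m.descFactorial r : ℝ) = (m.factorial : ℝ) := by
      exact_mod_cast congrArg (Nat.cast (R := ℝ)) (Nat.factorial_mul_descFactorial hrf)
    have hpow : w i ^ m = w i ^ r * w i ^ (m - r) := by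
      rw [← pow_add]; congr 1; omega
    have h3 : ((m - r).factorial : ℝ) ≠ 0 := Nat.cast_ne_zero.2 (Nat.factorial_ne_zero _)
    have hD : (m.descFactorial r : ℝ) ≠ 0 := by
      rw [Nat.cast_ne_zero]
      intro h
      have := Nat.descFactorial_eq_zero_iff_lt.1 h
      omega
    have key : (w i ^ m / (m.factorial : ℝ)) * ((m.descFactorial r : ℝ)) =
        w i ^ r * (w i ^ (m - r) / ((m - r).factorial : ℝ)) := by
      rw [hpow, ← hfac]
      field_simp
    rw [hP]
    linear_combination
      (∏ k ∈ Finset.univ.erase idx, w (k.1 + 1) ^ (f k) / (Nat.factorial (f k) : ℝ)) * key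

/-- **Descending factorial identity underlying (H.1)**: for nonnegative weights `w_j`,
the sum over FoF vectors `(m_1,…,m_n)` with `∑ j·m_j = n` of
`(∏_j w_j^{m_j}/m_j!)·∏_{k=0}^{r−1}(m_i − k)` equals `w_i^r` times the same sum taken
over FoF vectors `(m′_1,…,m′_n)` with `∑ j·m′_j = n − i·r`. -/
theorem FoF_descending_factorial_identity (n i r : ℕ)
    (hi : 1 ≤ i) (hr : 1 ≤ r) (hn : i * r ≤ n)
    (w : ℕ → ℝ) (hw : ∀ j : ℕ, 0 ≤ w j) :
    ∑ f ∈ (Fintype.piFinset fun _ : Fin n => Finset.range (n + 1)).filter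
        (fun f => ∑ k : Fin n, (k.1 + 1) * f k = n),
      (∏ k : Fin n, w (k.1 + 1) ^ (f k) / (Nat.factorial (f k) : ℝ)) *
        ∏ k ∈ Finset.range r,
          ((f ⟨i - 1, by have := Nat.le_mul_of_pos_right i hr; omega⟩ : ℝ) - (k : ℝ)) =
    w i ^ r *
      ∑ f ∈ (Fintype.piFinset fun _ : Fin n => Finset.range (n + 1)).filter
          (fun f => ∑ k : Fin n, (k.1 + 1) * f k = n - i * r),
        ∏ k : Fin n, w (k.1 + 1) ^ (f k) / (Nat.factorial (f k) : ℝ) := by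
  exact FoF_aux n i r hr hn w
    ⟨i - 1, by have := Nat.le_mul_of_pos_right i hr; omega⟩ (by simp; omega)
end

section
/- Let t be a positive integer and set a = −t; let γ_0 > 0, p ∈ (0,1), and let i ≥ 1 and r ≥ 1 be integers. For j ≥ 1 set w_j = γ_0 · Γ(j + t) · p^{j + t} / (Γ(1 + t) · j!). Then lim_{n→∞} [ ∑ over (m_1,…,m_n) ∈ ℕ^n with ∑_j j·m_j = n of ( ∏_j w_j^{m_j}/m_j! ) · ∏_{k=0}^{r−1}(m_i − k) ] / [ ∑ over (m_1,…,m_n) ∈ ℕ^n with ∑_j j·m_j = n of ∏_j w_j^{m_j}/m_j! ] = ( Γ(i + t) · γ_0 · p^{t} / (Γ(1 + t) · i!) )^r. -/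
/-!
Write `w_j = p^j a_j` with `a_j = γ₀ p^t Γ(j+t) / (Γ(1+t) j!)`. The geometric factor cancels,
and shifting `m_i` down by `r` turns the `r`-th factorial moment of `M_{i,n}` into
`a_i^r Z_{n-ir} / Z_n`, where `Z_n` is the total `a`-weight of the FoF vectors of size `n`,
i.e. the `n`-th coefficient of `exp (∑ a_j x^j)`. Differentiating gives
`n Z_n = ∑_j j a_j Z_{n-j}`. Since `b_j = j a_j` is nondecreasing with
`b_{j+1} / b_j = (j+t)/j → 1`, the quantity `n Z_n` changes by a vanishing proportion from `n`
to `n + 1`, whence `Z_n / Z_{n+1} → 1`.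
-/

open Real Finset Filter Asymptotics Topology
open scoped Nat

section UpdateProd
variable {ι α M : Type*} [Fintype ι] [DecidableEq ι] [CommMonoid M]

@[to_additive]
lemma Fintype.prod_apply_update (g : ι → α → M) (f : ι → α) (i : ι) (y : α) :
    ∏ k, g k (Function.update f i y k) = g i y * ∏ k ∈ univ.erase i, g k (f k) := by
  rw [← mul_prod_erase _ _ (mem_univ i), Function.update_self]
  congr 1
  refine Finset.prod_congr rfl fun k hk => ?_
  rw [Function.update_of_ne (ne_of_mem_erase hk)]

end UpdateProd

lemma descFactorial_mul_pow_div_factorial {x r : ℕ} (h : r ≤ x) (c : ℝ) :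
    (x.descFactorial r : ℝ) * (c ^ x / x !) = c ^ r * (c ^ (x - r) / (x - r)!) := by
  have hc : c ^ x = c ^ r * c ^ (x - r) := by rw [← pow_add, Nat.add_sub_cancel' h]
  have hd : (x.descFactorial r : ℝ) ≠ 0 := by
    exact_mod_cast Nat.descFactorial_eq_zero_iff_lt.not.2 h.not_gt
  rw [← Nat.factorial_mul_descFactorial h, hc]
  push_cast
  field_simp

namespace FoF

/- `f k` is the number of clusters of size `k + 1`; the bound `f k ≤ n` is automatic
(`mem_vectors`). -/
def vectors (N n : ℕ) : Finset (Fin N → ℕ) :=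
  (Fintype.piFinset fun _ : Fin N => range (n + 1)).filter
    (fun f => ∑ k : Fin N, (k.1 + 1) * f k = n)

noncomputable def weight (v : ℕ → ℝ) {N : ℕ} (f : Fin N → ℕ) : ℝ :=
  ∏ k : Fin N, v (k.1 + 1) ^ f k / (f k)!

noncomputable def totalWeight (v : ℕ → ℝ) (N n : ℕ) : ℝ :=
  ∑ f ∈ vectors N n, weight v f

variable {N n : ℕ} {f : Fin N → ℕ}

lemma mul_le_sum_mul (f : Fin N → ℕ) (k : Fin N) :
    (k.1 + 1) * f k ≤ ∑ k : Fin N, (k.1 + 1) * f k :=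
  single_le_sum (f := fun k : Fin N => (k.1 + 1) * f k) (fun _ _ => Nat.zero_le _) (mem_univ k)

lemma mem_vectors : f ∈ vectors N n ↔ ∑ k : Fin N, (k.1 + 1) * f k = n := by
  refine ⟨fun h => (mem_filter.1 h).2, fun h => mem_filter.2 ⟨?_, h⟩⟩
  refine Fintype.mem_piFinset.2 fun k => mem_range.2 ?_
  have := h ▸ mul_le_sum_mul f k
  nlinarith

lemma le_of_mem_vectors (hf : f ∈ vectors N n) (k : Fin N) : (k.1 + 1) * f k ≤ n :=
  mem_vectors.1 hf ▸ mul_le_sum_mul f k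

lemma totalWeight_succ (v : ℕ → ℝ) (hn : n ≤ N) :
    totalWeight v (N + 1) n = totalWeight v N n := by
  have hlast : ∀ f ∈ vectors (N + 1) n, f (Fin.last N) = 0 := fun f hf => by
    have := le_of_mem_vectors hf (Fin.last N)
    simp only [Fin.val_last] at this
    nlinarith
  refine sum_nbij' Fin.init (Fin.snoc · 0) (fun f hf => ?_) (fun g hg => ?_) (fun f hf => ?_)
    (fun g _ => Fin.init_snoc _ _) (fun f hf => ?_)
  · have := mem_vectors.1 hf
    rw [Fin.sum_univ_castSucc, hlast f hf, mul_zero, add_zero] at this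
    exact mem_vectors.2 this
  · rw [mem_vectors, Fin.sum_univ_castSucc]
    simpa using mem_vectors.1 hg
  · simp [← hlast f hf]
  · rw [weight, weight, Fin.prod_univ_castSucc, hlast f hf]
    simp [Fin.init]

lemma totalWeight_of_le (v : ℕ → ℝ) (hn : n ≤ N) :
    totalWeight v N n = totalWeight v n n := by
  induction N, hn using Nat.le_induction with
  | base => rfl
  | succ N hn ih => rw [totalWeight_succ v hn, ih]

lemma totalWeight_eq_pow_mul {v u : ℕ → ℝ} {p : ℝ}
    (h : ∀ j, v (j + 1) = p ^ (j + 1) * u (j + 1)) (N n : ℕ) :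
    totalWeight v N n = p ^ n * totalWeight u N n := by
  rw [totalWeight, totalWeight, mul_sum]
  refine sum_congr rfl fun f hf => ?_
  rw [← mem_vectors.1 hf, ← prod_pow_eq_pow_sum, weight, weight, ← prod_mul_distrib]
  refine prod_congr rfl fun k _ => ?_
  rw [h, mul_pow, pow_mul]
  ring

lemma totalWeight_pos {v : ℕ → ℝ} (hv : ∀ j, 0 < v (j + 1)) (N n : ℕ) :
    0 < totalWeight v (N + 1) n := by
  refine sum_pos (fun f _ => prod_pos fun k _ => by have := hv k; positivity)
    ⟨Pi.single 0 n, mem_vectors.2 ?_⟩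
  rw [Fintype.sum_eq_single 0 fun k hk => by simp [hk]]
  simp

lemma sum_descFactorial_mul_weight (v : ℕ → ℝ) (i : Fin N) (r : ℕ)
    (h : (i.1 + 1) * r ≤ n) :
    ∑ f ∈ vectors N n, ((f i).descFactorial r : ℝ) * weight v f
      = v (i.1 + 1) ^ r * totalWeight v N (n - (i.1 + 1) * r) := by
  rw [totalWeight, mul_sum, ← sum_filter_of_ne (p := fun f => r ≤ f i) fun f _ hf => by
    contrapose! hf
    simp [Nat.descFactorial_eq_zero_iff_lt.2 hf]]
  refine sum_nbij' (fun f => Function.update f i (f i - r))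
    (fun g => Function.update g i (g i + r)) (fun f hf => ?_) (fun g hg => ?_) (fun f hf => ?_)
    (fun g _ => ?_) (fun f hf => ?_)
  · obtain ⟨hf, hr⟩ := mem_filter.1 hf
    have hsum := mem_vectors.1 hf
    rw [← add_sum_erase _ _ (mem_univ i)] at hsum
    rw [mem_vectors, Fintype.sum_apply_update (fun (k : Fin N) x => (k.1 + 1) * x)]
    rw [← hsum, Nat.mul_sub, Nat.sub_add_comm (Nat.mul_le_mul_left _ hr)]
  · have hsum := mem_vectors.1 hg
    rw [← add_sum_erase _ _ (mem_univ i)] at hsum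
    rw [mem_filter, mem_vectors, Fintype.sum_apply_update (fun (k : Fin N) x => (k.1 + 1) * x),
      Function.update_self]
    refine ⟨?_, Nat.le_add_left r (g i)⟩
    rw [Nat.mul_add, add_right_comm, hsum, Nat.sub_add_cancel h]
  · rw [Function.update_self, Function.update_idem, Nat.sub_add_cancel (mem_filter.1 hf).2,
      Function.update_eq_self]
  · rw [Function.update_self, Function.update_idem, Nat.add_sub_cancel, Function.update_eq_self]
  · rw [weight, weight, ← mul_prod_erase _ _ (mem_univ i),
      Fintype.prod_apply_update (fun (k : Fin N) x => v (k.1 + 1) ^ x / (x ! : ℝ)), ← mul_assoc,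
      descFactorial_mul_pow_div_factorial (mem_filter.1 hf).2, mul_assoc]

lemma natCast_mul_totalWeight (v : ℕ → ℝ) (n : ℕ) :
    n * totalWeight v n n = ∑ j ∈ range (n + 1), (j * v j) * totalWeight v (n - j) (n - j) := by
  have hmoment (k : Fin n) : ∑ f ∈ vectors n n, (f k : ℝ) * weight v f
      = v (k.1 + 1) * totalWeight v (n - (k.1 + 1)) (n - (k.1 + 1)) := by
    simpa [totalWeight_of_le v (Nat.sub_le n (k.1 + 1))]
      using sum_descFactorial_mul_weight (n := n) v k 1 (by simp)
  calc n * totalWeight v n n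
      = ∑ f ∈ vectors n n, ∑ k : Fin n, (k.1 + 1 : ℝ) * ((f k : ℝ) * weight v f) := by
        rw [totalWeight, mul_sum]
        refine sum_congr rfl fun f hf => ?_
        simp_rw [← mul_assoc, ← sum_mul]
        exact_mod_cast congrArg (fun m : ℕ => (m : ℝ) * weight v f) (mem_vectors.1 hf).symm
    _ = ∑ k : Fin n,
          (k.1 + 1 : ℝ) * v (k.1 + 1) * totalWeight v (n - (k.1 + 1)) (n - (k.1 + 1)) := by
        rw [sum_comm]
        simp_rw [← mul_sum, hmoment, mul_assoc]
    _ = _ := by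
        rw [sum_range_succ', Fin.sum_univ_eq_sum_range
          (fun j => (j + 1 : ℝ) * v (j + 1) * totalWeight v (n - (j + 1)) (n - (j + 1)))]
        simp

lemma sum_descFactorial_mul_weight_div_totalWeight {v u : ℕ → ℝ} {p : ℝ} (hp : p ≠ 0)
    (h : ∀ j, v (j + 1) = p ^ (j + 1) * u (j + 1)) (i : Fin n) (r : ℕ)
    (hr : (i.1 + 1) * r ≤ n) :
    (∑ f ∈ vectors n n, ((f i).descFactorial r : ℝ) * weight v f) / totalWeight v n n
      = u (i.1 + 1) ^ r * (totalWeight u (n - (i.1 + 1) * r) (n - (i.1 + 1) * r)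
          / totalWeight u n n) := by
  rw [sum_descFactorial_mul_weight v i r hr, totalWeight_eq_pow_mul h, totalWeight_eq_pow_mul h,
    totalWeight_of_le u (Nat.sub_le _ _), h, mul_pow, ← pow_mul]
  have hpow : p ^ n = p ^ ((i.1 + 1) * r) * p ^ (n - (i.1 + 1) * r) := by
    rw [← pow_add, Nat.add_sub_cancel' hr]
  rw [hpow]
  field_simp

end FoF

section ConvolutionRecurrence

variable {A b : ℕ → ℝ}

lemma succ_mul_eq_sum_of_recurrence (hb0 : b 0 = 0)
    (hrec : ∀ n : ℕ, n * A n = ∑ j ∈ range (n + 1), b j * A (n - j)) (n : ℕ) :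
    (n + 1 : ℝ) * A (n + 1) = ∑ j ∈ range (n + 1), b (j + 1) * A (n - j) := by
  rw [← Nat.cast_succ, hrec, sum_range_succ', hb0, zero_mul, add_zero]
  simp

lemma succ_mul_sub_mul_eq_sum_of_recurrence (hb0 : b 0 = 0)
    (hrec : ∀ n : ℕ, n * A n = ∑ j ∈ range (n + 1), b j * A (n - j)) (n : ℕ) :
    (n + 1 : ℝ) * A (n + 1) - n * A n
      = ∑ j ∈ range (n + 1), (b (j + 1) - b j) * A (n - j) := by
  simp only [succ_mul_eq_sum_of_recurrence hb0 hrec, hrec, sub_mul, sum_sub_distrib]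

lemma monotone_natCast_mul_of_recurrence (hA : ∀ n, 0 < A n) (hb : Monotone b) (hb0 : b 0 = 0)
    (hrec : ∀ n : ℕ, n * A n = ∑ j ∈ range (n + 1), b j * A (n - j)) :
    Monotone fun n : ℕ => n * A n := by
  refine monotone_nat_of_le_succ fun n => sub_nonneg.1 ?_
  rw [Nat.cast_succ, succ_mul_sub_mul_eq_sum_of_recurrence hb0 hrec]
  exact sum_nonneg fun j _ => mul_nonneg (sub_nonneg.2 (hb j.le_succ)) (hA _).le

/- Beyond some `J`, `b (j + 1) - b j ≤ ε/2 * b (j + 1)`, which bounds the tail of the sum for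
`(n + 1) A (n + 1) - n A n` by `ε/2 * (n + 1) A (n + 1)`. The first `J` terms add up to at most
`b J * max_{j < J} A (n - j)`, and `A (n - j) ≤ (n + 1) A (n + 1) / (n - J)` because `k A k` is
nondecreasing. -/
lemma eventually_succ_mul_sub_mul_le (hA : ∀ n, 0 < A n) (hb : Monotone b) (hb0 : b 0 = 0)
    (hdiff : (fun j => b (j + 1) - b j) =o[atTop] fun j => b (j + 1))
    (hrec : ∀ n : ℕ, n * A n = ∑ j ∈ range (n + 1), b j * A (n - j))
    {ε : ℝ} (hε : 0 < ε) :
    ∀ᶠ n : ℕ in atTop,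
      (n + 1 : ℝ) * A (n + 1) - n * A n ≤ ε * ((n + 1 : ℝ) * A (n + 1)) := by
  have hbnn : ∀ j, 0 ≤ b j := fun j => hb0 ▸ hb (Nat.zero_le j)
  have hmono := monotone_natCast_mul_of_recurrence hA hb hb0 hrec
  obtain ⟨J, hJ⟩ := eventually_atTop.1 (hdiff.bound (half_pos hε))
  have hsmall : ∀ᶠ n : ℕ in atTop, b J / ((n - J : ℕ) : ℝ) < ε / 2 :=
    ((tendsto_const_div_atTop_nhds_zero_nat (b J)).comp
      (tendsto_sub_atTop_nat J)).eventually_lt_const (half_pos hε)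
  filter_upwards [hsmall, eventually_gt_atTop J] with n hn hJn
  set C := (n + 1 : ℝ) * A (n + 1)
  have hC : 0 ≤ C := mul_nonneg (by positivity) (hA _).le
  have hhead_le : ∀ j < J, A (n - j) ≤ C / (n - J : ℕ) := fun j hj => by
    have hpos : (0 : ℝ) < (n - J : ℕ) := by exact_mod_cast Nat.sub_pos_of_lt hJn
    have hle : ((n - J : ℕ) : ℝ) ≤ (n - j : ℕ) := by
      exact_mod_cast Nat.sub_le_sub_left hj.le n
    rw [le_div_iff₀ hpos]
    calc A (n - j) * (n - J : ℕ) ≤ A (n - j) * (n - j : ℕ) :=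
          mul_le_mul_of_nonneg_left hle (hA _).le
      _ ≤ C := by simpa [C, mul_comm] using hmono (show n - j ≤ n + 1 by omega)
  have hhead : ∑ j ∈ range J, (b (j + 1) - b j) * A (n - j) ≤ ε / 2 * C := calc
    _ ≤ ∑ j ∈ range J, (b (j + 1) - b j) * (C / (n - J : ℕ)) :=
        sum_le_sum fun j hj => mul_le_mul_of_nonneg_left (hhead_le j (mem_range.1 hj))
          (sub_nonneg.2 (hb j.le_succ))
    _ = b J / (n - J : ℕ) * C := by rw [← sum_mul, sum_range_sub b, hb0]; ring
    _ ≤ ε / 2 * C := mul_le_mul_of_nonneg_right hn.le hC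
  have htail : ∑ j ∈ Ico J (n + 1), (b (j + 1) - b j) * A (n - j) ≤ ε / 2 * C := calc
    _ ≤ ∑ j ∈ Ico J (n + 1), ε / 2 * (b (j + 1) * A (n - j)) := sum_le_sum fun j hj => by
        have hj := hJ j (mem_Ico.1 hj).1
        rw [Real.norm_eq_abs, Real.norm_eq_abs, abs_of_nonneg (hbnn _)] at hj
        rw [← mul_assoc]
        exact mul_le_mul_of_nonneg_right ((le_abs_self _).trans hj) (hA _).le
    _ ≤ ∑ j ∈ range (n + 1), ε / 2 * (b (j + 1) * A (n - j)) :=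
        sum_le_sum_of_subset_of_nonneg (fun j hj => by simp at hj ⊢; omega)
          fun j _ _ => by have := hbnn (j + 1); have := hA (n - j); positivity
    _ = ε / 2 * C := by rw [← mul_sum, ← succ_mul_eq_sum_of_recurrence hb0 hrec]
  rw [succ_mul_sub_mul_eq_sum_of_recurrence hb0 hrec,
    ← sum_range_add_sum_Ico _ (by omega : J ≤ n + 1)]
  linarith

lemma tendsto_div_succ_of_eventually_sub_le {c : ℕ → ℝ} (hc : Monotone c)
    (hpos : ∀ n, 0 < c (n + 1))
    (h : ∀ ε > 0, ∀ᶠ n in atTop, c (n + 1) - c n ≤ ε * c (n + 1)) :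
    Tendsto (fun n => c n / c (n + 1)) atTop (𝓝 1) := by
  refine tendsto_order.2 ⟨fun a ha => ?_, fun a ha => Eventually.of_forall fun n => ?_⟩
  · filter_upwards [h ((1 - a) / 2) (by linarith)] with n hn
    rw [lt_div_iff₀ (hpos n)]
    nlinarith [hpos n]
  · exact ((div_le_one (hpos n)).2 (hc n.le_succ)).trans_lt ha

theorem tendsto_div_succ_of_recurrence (hA : ∀ n, 0 < A n) (hb : Monotone b)
    (hdiff : (fun j => b (j + 1) - b j) =o[atTop] fun j => b (j + 1))
    (hrec : ∀ n : ℕ, n * A n = ∑ j ∈ range (n + 1), b j * A (n - j)) :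
    Tendsto (fun n => A n / A (n + 1)) atTop (𝓝 1) := by
  have hb0 : b 0 = 0 := by simpa [(hA 0).ne'] using (hrec 0).symm
  have hc := tendsto_div_succ_of_eventually_sub_le
    (monotone_natCast_mul_of_recurrence hA hb hb0 hrec) (fun n => by have := hA (n + 1); positivity)
    fun ε hε => by
      simpa using eventually_succ_mul_sub_mul_le hA hb hb0 hdiff hrec hε
  have hlim := hc.div (tendsto_natCast_div_add_atTop (1 : ℝ)) one_ne_zero
  rw [div_one] at hlim
  refine hlim.congr' ?_
  filter_upwards [eventually_gt_atTop 0] with n hn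
  have := hA n; have := hA (n + 1)
  have : (n : ℝ) ≠ 0 := by positivity
  simp only [Pi.div_apply]
  push_cast
  field_simp

lemma tendsto_div_add_of_tendsto_div_succ (hA : ∀ n, A n ≠ 0)
    (h : Tendsto (fun n => A n / A (n + 1)) atTop (𝓝 1)) (m : ℕ) :
    Tendsto (fun n => A n / A (n + m)) atTop (𝓝 1) := by
  induction m with
  | zero => simp [div_self (hA _)]
  | succ m ih =>
    simpa [div_mul_div_cancel₀ (hA _), add_assoc]
      using ih.mul (h.comp (tendsto_add_atTop_nat m))

end ConvolutionRecurrence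

lemma succ_mul_Gamma_div_factorial_succ (t : ℝ) (j : ℕ) (hjt : (j : ℝ) + t ≠ 0) :
    ((j + 1 : ℕ) : ℝ) * (Gamma ((j + 1 : ℕ) + t) / (j + 1)!)
      = (j + t) * (Gamma (j + t) / j !) := by
  rw [Nat.factorial_succ]
  push_cast
  rw [show (j : ℝ) + 1 + t = j + t + 1 by ring, Gamma_add_one hjt]
  field_simp

section PolynomialGrowth

variable {b : ℕ → ℝ} {t : ℝ}

lemma sub_eq_div_mul_of_mul_succ_eq (ht : 0 ≤ t) {j : ℕ} (hj : 1 ≤ j)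
    (h : j * b (j + 1) = (j + t) * b j) : b (j + 1) - b j = t / (j + t) * b (j + 1) := by
  have : (1 : ℝ) ≤ j := by exact_mod_cast hj
  field_simp
  linarith

lemma monotone_of_mul_succ_eq (ht : 0 ≤ t) (hb0 : b 0 = 0) (hbnn : ∀ j, 0 ≤ b j)
    (h : ∀ j, 1 ≤ j → j * b (j + 1) = (j + t) * b j) : Monotone b := by
  refine monotone_nat_of_le_succ fun j => ?_
  rcases Nat.eq_zero_or_pos j with rfl | hj
  · simpa [hb0] using hbnn 1
  · rw [← sub_nonneg, sub_eq_div_mul_of_mul_succ_eq ht hj (h j hj)]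
    exact mul_nonneg (by positivity) (hbnn _)

lemma isLittleO_sub_of_mul_succ_eq (ht : 0 ≤ t)
    (h : ∀ j, 1 ≤ j → j * b (j + 1) = (j + t) * b j) :
    (fun j => b (j + 1) - b j) =o[atTop] fun j => b (j + 1) := by
  refine isLittleO_iff_exists_eq_mul.2 ⟨fun j : ℕ => t / (j + t), ?_, ?_⟩
  · exact tendsto_const_nhds.div_atTop (tendsto_natCast_atTop_atTop.atTop_add tendsto_const_nhds)
  · filter_upwards [eventually_ge_atTop 1] with j hj
    exact sub_eq_div_mul_of_mul_succ_eq ht hj (h j hj)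

end PolynomialGrowth

namespace FoF

variable {K t : ℝ}

lemma totalWeight_Gamma_pos (hK : 0 < K) (ht : 0 ≤ t) (n : ℕ) :
    0 < totalWeight (fun j => K * (Gamma (j + t) / j !)) n n := by
  rw [← totalWeight_succ _ le_rfl]
  refine totalWeight_pos (fun j => ?_) n n
  have := Gamma_pos_of_pos (by positivity : (0 : ℝ) < (j + 1 : ℕ) + t)
  positivity

theorem tendsto_totalWeight_Gamma_div (hK : 0 < K) (ht : 0 ≤ t) (m : ℕ) :
    Tendsto (fun n => totalWeight (fun j => K * (Gamma (j + t) / j !)) n n /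
      totalWeight (fun j => K * (Gamma (j + t) / j !)) (n + m) (n + m)) atTop (𝓝 1) := by
  set a : ℕ → ℝ := fun j => K * (Gamma (j + t) / j !)
  set b : ℕ → ℝ := fun j => j * a j with hb_def
  have hb : ∀ j, 1 ≤ j → j * b (j + 1) = (j + t) * b j := fun j _ => by
    simp only [hb_def]
    linear_combination (j * K) * succ_mul_Gamma_div_factorial_succ t j (by positivity)
  have hbnn (j : ℕ) : 0 ≤ b j := by
    have := Gamma_nonneg_of_nonneg (by positivity : (0 : ℝ) ≤ j + t)
    positivity
  exact tendsto_div_add_of_tendsto_div_succ (fun n => (totalWeight_Gamma_pos hK ht n).ne')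
    (tendsto_div_succ_of_recurrence (totalWeight_Gamma_pos hK ht)
      (monotone_of_mul_succ_eq ht (by simp [b]) hbnn hb) (isLittleO_sub_of_mul_succ_eq ht hb)
      (natCast_mul_totalWeight a)) m

end FoF

open FoF in
/-- **Table 1, third row (cluster sizes, `a = −t`), Appendix H**: under the generalized
negative binomial process with discount `a = −t` (`t` a positive integer), so that
`w_j = γ₀ Γ(j+t) p^{j+t}/(Γ(1+t) j!)`, the `r`-th descending factorial moment of
`M_{i,n}` converges to `(Γ(i+t) γ₀ p^{t}/(Γ(1+t) i!))^r` as `n → ∞`. -/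
theorem FoF_factorial_moment_limit_neg_discount (t : ℕ)
    (γ₀ p : ℝ) (hγ : 0 < γ₀) (hp : p ∈ Set.Ioo (0 : ℝ) 1)
    (i r : ℕ) (hi : 1 ≤ i)
    (w : ℕ → ℝ)
    (hw : ∀ j : ℕ, 1 ≤ j →
      w j = γ₀ * Real.Gamma ((j : ℝ) + (t : ℝ)) * p ^ (j + t) /
        (Real.Gamma (1 + (t : ℝ)) * (Nat.factorial j : ℝ))) :
    Tendsto (fun n : ℕ =>
        (∑ f ∈ (Fintype.piFinset fun _ : Fin n => Finset.range (n + 1)).filter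
            (fun f => ∑ k : Fin n, (k.1 + 1) * f k = n),
          (∏ k : Fin n, w (k.1 + 1) ^ (f k) / (Nat.factorial (f k) : ℝ)) *
            (if h : i ≤ n then
              ∏ k ∈ Finset.range r, ((f ⟨i - 1, by omega⟩ : ℝ) - (k : ℝ))
            else 0)) /
        ∑ f ∈ (Fintype.piFinset fun _ : Fin n => Finset.range (n + 1)).filter
            (fun f => ∑ k : Fin n, (k.1 + 1) * f k = n),
          ∏ k : Fin n, w (k.1 + 1) ^ (f k) / (Nat.factorial (f k) : ℝ))
      atTop
      (nhds ((Real.Gamma ((i : ℝ) + (t : ℝ)) * γ₀ * p ^ t /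
        (Real.Gamma (1 + (t : ℝ)) * (Nat.factorial i : ℝ))) ^ r)) := by
  obtain ⟨hp0, -⟩ := hp
  have hG : 0 < Gamma (1 + t) := Gamma_pos_of_pos (by positivity)
  set K := γ₀ * p ^ t / Gamma (1 + t) with hK
  set a : ℕ → ℝ := fun j => K * (Gamma (j + t) / j !) with ha
  have hwa (j : ℕ) : w (j + 1) = p ^ (j + 1) * a (j + 1) := by
    rw [hw _ j.succ_pos, ha, hK, pow_add]
    field_simp
  have hai : a i = Gamma (i + t) * γ₀ * p ^ t / (Gamma (1 + t) * i !) := by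
    rw [ha, hK]
    ring
  rw [← hai, ← mul_one (a i ^ r)]
  refine (((tendsto_totalWeight_Gamma_div (K := K) (by positivity) t.cast_nonneg (i * r)).comp
    (tendsto_sub_atTop_nat (i * r))).const_mul _).congr' ?_
  filter_upwards [eventually_ge_atTop (i * r + i)] with n hn
  have hk : (⟨i - 1, by omega⟩ : Fin n).1 + 1 = i := Nat.sub_add_cancel hi
  have hmoment := sum_descFactorial_mul_weight_div_totalWeight hp0.ne' hwa
    (⟨i - 1, by omega⟩ : Fin n) r (by rw [hk]; omega)
  rw [hk] at hmoment
  simp only [dif_pos (by omega : i ≤ n), ← descPochhammer_eval_eq_prod_range,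
    descPochhammer_eval_eq_descFactorial, Function.comp_apply,
    Nat.sub_add_cancel (by omega : i * r ≤ n)]
  change _ = (∑ f ∈ vectors n n, weight w f * _) / totalWeight w n n
  simp_rw [mul_comm (weight w _)]
  exact hmoment.symm
end
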